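/- arXiv:1702.07986 — 7 statements merged into one kernel-verified Lean document; each statement's English description precedes it below -/
import Mathlib

section
/- For every integer n ≥ 4, the strong rainbow connection number of the cycle C_n equals ⌈n/2⌉. -/
open SimpleGraph Finset

/-- A coloring `c` of (potential) edges is a rainbow coloring of `G` if every pair of
distinct vertices is joined by a path whose edges have pairwise distinct colors. -/
def SimpleGraph.IsRainbowColoring {V α : Type*} (G : SimpleGraph V) (c : Sym2 V → α) : Prop :=
  ∀ u v : V, u ≠ v → ∃ p : G.Walk u v, p.IsPath ∧ (p.edges.map c).Nodup

/-- A strong rainbow coloring: every pair of distinct vertices is joined by a rainbow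
path whose length equals the distance between them. -/
def SimpleGraph.IsStrongRainbowColoring {V α : Type*} (G : SimpleGraph V) (c : Sym2 V → α) : Prop :=
  ∀ u v : V, u ≠ v → ∃ p : G.Walk u v, p.IsPath ∧ p.length = G.dist u v ∧ (p.edges.map c).Nodup

/-- The rainbow connection number: least number of colors of a rainbow coloring. -/
noncomputable def SimpleGraph.rc {V : Type*} (G : SimpleGraph V) : ℕ :=
  sInf {k : ℕ | ∃ c : Sym2 V → Fin k, G.IsRainbowColoring c}

/-- The strong rainbow connection number: least number of colors of a strong rainbow coloring. -/
noncomputable def SimpleGraph.src {V : Type*} (G : SimpleGraph V) : ℕ :=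
  sInf {k : ℕ | ∃ c : Sym2 V → Fin k, G.IsStrongRainbowColoring c}

/-- The toroidal mesh `C_{n 0} □ ⋯ □ C_{n (r-1)}`: the Cartesian (box) product of the
cycles `cycleGraph (n i)`. -/
def toroidalMesh {r : ℕ} (n : Fin r → ℕ) : SimpleGraph (∀ i, Fin (n i)) :=
  SimpleGraph.fromRel fun u v =>
    ∃ i, (cycleGraph (n i)).Adj (u i) (v i) ∧ ∀ j, j ≠ i → u j = v j


open Fin.NatCast Fin.CommRing

variable {n : ℕ} [NeZero n]

lemma adj_succ (hn : 2 ≤ n) (u : Fin n) : (cycleGraph n).Adj u (u + 1) := by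
  rw [cycleGraph_adj']
  right
  rw [add_sub_cancel_left]
  simp [Fin.val_one', Nat.mod_eq_of_lt (by omega : 1 < n)]

def fwd (hn : 2 ≤ n) : (t : ℕ) → (u : Fin n) → (cycleGraph n).Walk u (u + (t : Fin n))
  | 0, u => Walk.nil.copy rfl (by simp)
  | t+1, u => (Walk.cons (adj_succ hn u) (fwd hn t (u+1))).copy rfl (by push_cast; ring)

lemma fwd_length (hn : 2 ≤ n) (t : ℕ) (u : Fin n) : (fwd hn t u).length = t := by
  induction t generalizing u with
  | zero => simp [fwd]
  | succ t ih => simp [fwd, ih]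

lemma fwd_edges (hn : 2 ≤ n) (t : ℕ) (u : Fin n) :
    (fwd hn t u).edges = (List.range t).map (fun i : ℕ => s(u + (i : Fin n), u + (i : Fin n) + 1)) := by
  induction t generalizing u with
  | zero => simp [fwd]
  | succ t ih =>
    rw [List.range_succ_eq_map]
    simp only [fwd, Walk.edges_copy, Walk.edges_cons, ih, List.map_cons, List.map_map]
    congr 1
    · simp
    · apply List.map_congr_left
      intro i _
      simp only [Function.comp]
      congr 1 <;> push_cast <;> ring

lemma fwd_support (hn : 2 ≤ n) (t : ℕ) (u : Fin n) :
    (fwd hn t u).support = (List.range (t+1)).map (fun i : ℕ => u + (i : Fin n)) := by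
  induction t generalizing u with
  | zero =>
    have : List.range 1 = [0] := rfl
    rw [this]
    simp [fwd]
  | succ t ih =>
    rw [List.range_succ_eq_map]
    simp only [fwd, Walk.support_copy, Walk.support_cons, ih, List.map_cons, List.map_map]
    congr 1
    · simp
    · apply List.map_congr_left
      intro i _
      simp only [Function.comp]
      push_cast; ring

lemma sub_val (a b : Fin n) :
    (a - b).val = if b.val ≤ a.val then a.val - b.val else a.val + n - b.val := by
  have ha := a.isLt
  have hb := b.isLt
  simp only [Fin.sub_def]
  rcases le_or_gt b.val a.val with h | h
  · rw [if_pos h, show n - b.val + a.val = (a.val - b.val) + n from by omega,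
      Nat.add_mod_right, Nat.mod_eq_of_lt (by omega)]
  · rw [if_neg (not_le.mpr h), Nat.mod_eq_of_lt (by omega)]
    omega

/-- cycle distance -/
def cdist (u v : Fin n) : ℕ := min (v - u).val (u - v).val

lemma cdist_le_length {u v : Fin n} (p : (cycleGraph n).Walk u v) : cdist u v ≤ p.length := by
  induction p with
  | nil => simp [cdist]
  | @cons u x v h q ih =>
    rw [Walk.length_cons]
    have h' := cycleGraph_adj'.mp h
    have key : cdist u v ≤ cdist x v + 1 := by
      have ha := u.isLt; have hb := x.isLt; have hc := v.isLt
      unfold cdist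
      simp only [sub_val] at h' ⊢
      split_ifs at h' ⊢ <;> omega
    omega

lemma cyc_conn (u v : Fin n) : (cycleGraph n).Reachable u v := by
  have h : 0 < n := Nat.pos_of_ne_zero (NeZero.ne n)
  obtain ⟨m, rfl⟩ : ∃ m, n = m + 1 := ⟨n - 1, by omega⟩
  exact cycleGraph_connected u v

lemma dist_eq_cdist (hn : 2 ≤ n) (u v : Fin n) : (cycleGraph n).dist u v = cdist u v := by
  apply le_antisymm
  · rcases le_or_gt (v - u).val (u - v).val with h | h
    · have := SimpleGraph.dist_le ((fwd hn (v - u).val u).copy rfl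
        (show u + (((v - u).val : ℕ) : Fin n) = v by rw [Fin.cast_val_eq_self]; ring))
      rw [Walk.length_copy, fwd_length] at this
      unfold cdist
      omega
    · have := SimpleGraph.dist_le (((fwd hn (u - v).val v).copy rfl
        (show v + (((u - v).val : ℕ) : Fin n) = u by rw [Fin.cast_val_eq_self]; ring)).reverse)
      rw [Walk.length_reverse, Walk.length_copy, fwd_length] at this
      unfold cdist
      omega
  · obtain ⟨p, hp⟩ := (cyc_conn u v).exists_walk_length_eq_dist
    rw [← hp]
    exact cdist_le_length p

lemma two_mod_ne_zero (hn : 4 ≤ n) {a b : Fin n} (h1 : (b - a).val = 1) (h2 : (a - b).val = 1) :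
    False := by
  have key : ((b - a) + (a - b)).val = 0 := by
    rw [show (b - a) + (a - b) = 0 from by ring]
    rfl
  rw [Fin.add_def, h1, h2] at key
  have key2 : (1 + 1) % n = 0 := key
  rw [Nat.mod_eq_of_lt (by omega)] at key2
  omega

def col (hn : 4 ≤ n) : Sym2 (Fin n) → Fin ((n+1)/2) := Sym2.lift ⟨fun a b =>
  if (b - a).val = 1 then ⟨a.val % ((n+1)/2), Nat.mod_lt _ (by omega)⟩
  else if (a - b).val = 1 then ⟨b.val % ((n+1)/2), Nat.mod_lt _ (by omega)⟩
  else ⟨0, by omega⟩, by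
    intro a b
    by_cases h1 : (b - a).val = 1 <;> by_cases h2 : (a - b).val = 1
    · exact (two_mod_ne_zero hn h1 h2).elim
    · simp [h1, h2]
    · simp [h1, h2]
    · simp [h1, h2]⟩

lemma col_edge (hn : 4 ≤ n) (a : Fin n) :
    col hn s(a, a + 1) = ⟨a.val % ((n+1)/2), Nat.mod_lt _ (by omega)⟩ := by
  have h1 : ((a + 1) - a).val = 1 := by
    rw [add_sub_cancel_left]
    simp [Fin.val_one', Nat.mod_eq_of_lt (show 1 < n by omega)]
  simp only [col, Sym2.lift_mk]
  rw [if_pos h1]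

lemma key_inj (hn : 4 ≤ n) {t i j : ℕ} (ht : 2*t ≤ n) (hi : i < t) (hj : j < t) (u : Fin n)
    (h : (u + (i : Fin n)).val % ((n+1)/2) = (u + (j : Fin n)).val % ((n+1)/2)) : i = j := by
  set k := (n+1)/2 with hk
  have hval : ∀ m : ℕ, m < t → (u + (m : Fin n)).val = (u.val + m) % n := by
    intro m hm
    simp [Fin.add_def, Fin.val_natCast, Nat.add_mod_mod]
  rw [hval i hi, hval j hj] at h
  have hu := u.isLt
  have hchar : ∀ m : ℕ, m < t → (u.val + m) % n = u.val + m ∨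
      ((u.val + m) % n = u.val + m - n ∧ n ≤ u.val + m) := by
    intro m hm
    rcases Nat.lt_or_ge (u.val + m) n with hlt | hge
    · exact Or.inl (Nat.mod_eq_of_lt hlt)
    · right
      refine ⟨?_, hge⟩
      rw [Nat.mod_eq_sub_mod hge, Nat.mod_eq_of_lt (by omega)]
  have hci := hchar i hi
  have hcj := hchar j hj
  have han : (u.val + i) % n < n := Nat.mod_lt _ (by omega)
  have hbn : (u.val + j) % n < n := Nat.mod_lt _ (by omega)
  set a := (u.val + i) % n with ha
  set b := (u.val + j) % n with hb
  rcases le_total a b with hle | hle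
  · have hdvd : k ∣ b - a := (Nat.modEq_iff_dvd' hle).mp h
    obtain ⟨c, hc⟩ := hdvd
    rcases c with _ | _ | c
    · omega
    · omega
    · have h2 : k * 2 ≤ k * (c + 1 + 1) := Nat.mul_le_mul_left k (by omega)
      generalize k * (c + 1 + 1) = M at hc h2
      omega
  · have hdvd : k ∣ a - b := (Nat.modEq_iff_dvd' hle).mp h.symm
    obtain ⟨c, hc⟩ := hdvd
    rcases c with _ | _ | c
    · omega
    · omega
    · have h2 : k * 2 ≤ k * (c + 1 + 1) := Nat.mul_le_mul_left k (by omega)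
      generalize k * (c + 1 + 1) = M at hc h2
      omega

lemma half_geodesic (hn : 4 ≤ n) (u v : Fin n) (huv : u ≠ v) (hle : (v - u).val ≤ (u - v).val) :
    ∃ p : (cycleGraph n).Walk u v, p.IsPath ∧ p.length = (cycleGraph n).dist u v ∧
      ((p.edges.map (col hn)).Nodup) := by
  have hn2 : 2 ≤ n := by omega
  set t := (v - u).val with ht
  have hvals : u.val ≠ v.val := fun h => huv (Fin.val_injective h)
  have hu := u.isLt; have hv := v.isLt
  have hsum : t + (u - v).val = n := by
    rw [ht, sub_val, sub_val]
    split_ifs <;> omega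
  have ht2 : 2 * t ≤ n := by omega
  have hdist : (cycleGraph n).dist u v = t := by
    rw [dist_eq_cdist hn2]
    unfold cdist
    omega
  refine ⟨(fwd hn2 t u).copy rfl
    (show u + ((t : ℕ) : Fin n) = v by rw [ht, Fin.cast_val_eq_self]; ring), ?_, ?_, ?_⟩
  case refine_2 => rw [Walk.length_copy, fwd_length, hdist]
  case refine_1 =>
    apply Walk.isPath_of_length_eq_dist
    rw [Walk.length_copy, fwd_length, hdist]
  case refine_3 =>
    rw [Walk.edges_copy, fwd_edges, List.map_map]
    have hmapeq : (List.range t).map ((col hn) ∘ (fun i : ℕ => s(u + (i : Fin n), u + (i : Fin n) + 1)))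
        = (List.range t).map (fun i : ℕ => (⟨(u + (i : Fin n)).val % ((n+1)/2),
            Nat.mod_lt _ (by omega)⟩ : Fin ((n+1)/2))) := by
      apply List.map_congr_left
      intro i _
      simp only [Function.comp]
      rw [col_edge hn]
    rw [hmapeq]
    apply List.Nodup.of_map Fin.val
    rw [List.map_map]
    have : (Fin.val ∘ fun i : ℕ => (⟨(u + (i : Fin n)).val % ((n+1)/2),
        Nat.mod_lt _ (by omega)⟩ : Fin ((n+1)/2))) = fun i : ℕ => (u + (i : Fin n)).val % ((n+1)/2) := rfl
    rw [this]
    apply List.Nodup.map_on _ List.nodup_range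
    intro i hi j hj hij
    exact key_inj hn ht2 (List.mem_range.mp hi) (List.mem_range.mp hj) u hij

lemma upper (hn : 4 ≤ n) : (cycleGraph n).IsStrongRainbowColoring (col hn) := by
  intro u v huv
  rcases le_total (v - u).val (u - v).val with hle | hle
  · exact half_geodesic hn u v huv hle
  · obtain ⟨p, hp, hl, hc⟩ := half_geodesic hn v u huv.symm hle
    refine ⟨p.reverse, hp.reverse, ?_, ?_⟩
    · rw [Walk.length_reverse, hl, SimpleGraph.dist_comm]
    · rw [Walk.edges_reverse, List.map_reverse]
      exact List.nodup_reverse.mpr hc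

lemma sub_add_val (u v : Fin n) (huv : u ≠ v) : (v - u).val + (u - v).val = n := by
  have : u.val ≠ v.val := fun h => huv (Fin.val_injective h)
  have hu := u.isLt; have hv := v.isLt
  rw [sub_val, sub_val]
  split_ifs <;> omega

lemma walk_edges_of_min (hn : 4 ≤ n) {u v : Fin n} (p : (cycleGraph n).Walk u v)
    (hlen : (v - u).val = p.length) (hlt : 2 * p.length < n) :
    p.edges = (List.range p.length).map (fun i : ℕ => s(u + (i : Fin n), u + (i : Fin n) + 1)) := by
  induction p with
  | nil => simp
  | @cons u x v h q ih =>
    rw [Walk.length_cons] at hlen hlt ⊢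
    have hL := q.length
    have h' := cycleGraph_adj'.mp h
    have hone : ((1 : Fin n)).val = 1 := by
      simp [Fin.val_one', Nat.mod_eq_of_lt (show 1 < n by omega)]
    rcases h' with h' | h'
    · -- x = u - 1 : contradiction via cdist
      exfalso
      have hxv : (v - x).val = q.length + 2 := by
        have : v - x = (v - u) + (u - x) := by ring
        have hval : (v - x).val = ((v - u).val + (u - x).val) % n := by
          rw [this, Fin.add_def]
        rw [hval, h', hlen]
        rcases Nat.lt_or_ge (q.length + 1 + 1) n with hc | hc
        · rw [Nat.mod_eq_of_lt hc]
        · exfalso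
          omega
      have hcd := cdist_le_length q
      unfold cdist at hcd
      rcases eq_or_ne x v with rfl | hne
      · simp at hxv
      · have hs := sub_add_val x v hne
        omega
    · -- x = u + 1
      have hx : x = u + 1 := by
        have : x - u = 1 := Fin.val_injective (by rw [h', hone])
        have := congrArg (· + u) this
        simpa [sub_add_cancel, add_comm] using this
      subst hx
      have hvx : (v - (u + 1)).val = q.length := by
        have : v - (u + 1) = (v - u) - 1 := by ring
        rw [this, sub_val, hlen, hone]
        rw [if_pos (by omega)]
        omega
      have hq := ih hvx (by omega)
      rw [Walk.edges_cons, hq, List.range_succ_eq_map, List.map_cons, List.map_map]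
      congr 1
      · simp
      · apply List.map_congr_left
        intro i _
        simp only [Function.comp]
        congr 1 <;> (push_cast; ring)

lemma natCast_val (hn : 4 ≤ n) {m : ℕ} (hm : m < n) : ((m : ℕ) : Fin n).val = m := by
  rw [Fin.val_natCast]
  exact Nat.mod_eq_of_lt hm

lemma lower_half (hn : 4 ≤ n) {j : ℕ} (c : Sym2 (Fin n) → Fin j)
    (hc : (cycleGraph n).IsStrongRainbowColoring c) : n / 2 ≤ j := by
  set m := n / 2 with hm
  set v : Fin n := ((m : ℕ) : Fin n) with hv
  have hvval : v.val = m := natCast_val hn (by omega)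
  have hne : (0 : Fin n) ≠ v := by
    intro h
    rw [← h] at hvval
    simp [Fin.val_zero] at hvval
    omega
  have hdist : (cycleGraph n).dist 0 v = m := by
    rw [dist_eq_cdist (by omega)]
    unfold cdist
    have h1 : (v - 0).val = m := by rw [sub_zero, hvval]
    have h2 : (v - 0).val + (0 - v).val = n := sub_add_val 0 v hne
    omega
  obtain ⟨p, _, hlen, hnd⟩ := hc 0 v hne
  have := hnd.length_le_card
  rw [List.length_map, Walk.length_edges, hlen, hdist, Fintype.card_fin] at this
  omega

lemma odd_unique_color (hn : 4 ≤ n) (hodd : n % 2 = 1) {j : ℕ} (c : Sym2 (Fin n) → Fin j)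
    (hc : (cycleGraph n).IsStrongRainbowColoring c) (hj : j = n / 2) (u : Fin n) (c₀ : Fin j) :
    ∃! i : ℕ, i < n / 2 ∧ c s(u + (i : Fin n), u + (i : Fin n) + 1) = c₀ := by
  set m := n / 2 with hm
  set v : Fin n := u + ((m : ℕ) : Fin n) with hv
  have hmval : ((m : ℕ) : Fin n).val = m := natCast_val hn (by omega)
  have hvu : (v - u).val = m := by rw [hv, add_sub_cancel_left, hmval]
  have hne : u ≠ v := by
    intro h
    rw [← h, sub_self, Fin.val_zero] at hvu
    omega
  have hdist : (cycleGraph n).dist u v = m := by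
    rw [dist_eq_cdist (by omega)]
    unfold cdist
    have h2 := sub_add_val u v hne
    omega
  obtain ⟨p, _, hlen, hnd⟩ := hc u v hne
  rw [hdist] at hlen
  have hedges := walk_edges_of_min hn p (by rw [hvu, hlen]) (by rw [hlen]; omega)
  rw [hlen] at hedges
  rw [hedges, List.map_map] at hnd
  -- the color list
  set L := (List.range m).map
    (c ∘ fun i : ℕ => s(u + (i : Fin n), u + (i : Fin n) + 1)) with hL
  have hLlen : L.length = m := by simp [hL]
  -- completeness: c₀ ∈ L
  have hmem : c₀ ∈ L := by
    have hcard : L.toFinset.card = m := by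
      rw [List.toFinset_card_of_nodup hnd, hLlen]
    have : L.toFinset = (Finset.univ : Finset (Fin j)) := by
      apply Finset.eq_univ_of_card
      rw [hcard, Fintype.card_fin, hj]
    rw [← List.mem_toFinset, this]
    exact Finset.mem_univ _
  rw [hL, List.mem_map] at hmem
  obtain ⟨i, hi, hci⟩ := hmem
  simp only [Function.comp_apply] at hci
  refine ⟨i, ⟨List.mem_range.mp hi, hci⟩, ?_⟩
  intro i' ⟨hi', hci'⟩
  exact List.inj_on_of_nodup_map hnd (List.mem_range.mpr hi') hi (by
    simp only [Function.comp_apply]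
    rw [hci', hci])

lemma lower_odd (hn : 4 ≤ n) (hodd : n % 2 = 1) {j : ℕ} (c : Sym2 (Fin n) → Fin j)
    (hc : (cycleGraph n).IsStrongRainbowColoring c) (hj : j = n / 2) : False := by
  set m := n / 2 with hm
  have hm2 : 2 ≤ m := by omega
  have hj0 : 0 < j := by omega
  set c₀ : Fin j := ⟨0, hj0⟩ with hc₀
  set T : Finset (Fin n × Fin m) := Finset.univ.filter
    (fun p => c s(p.1 + ((p.2 : ℕ) : Fin n), p.1 + ((p.2 : ℕ) : Fin n) + 1) = c₀) with hT
  set S : Finset (Fin n) := Finset.univ.filter (fun a => c s(a, a + 1) = c₀) with hS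
  have h1 : T.card = n := by
    rw [Finset.card_eq_sum_card_fiberwise (f := Prod.fst) (fun p _ => Finset.mem_univ p.1)]
    have : ∀ u ∈ (Finset.univ : Finset (Fin n)),
        (T.filter (fun p => p.1 = u)).card = 1 := by
      intro u _
      obtain ⟨i₀, ⟨hi₀, hci₀⟩, huniq⟩ := odd_unique_color hn hodd c hc hj u c₀
      rw [Finset.card_eq_one]
      refine ⟨(u, ⟨i₀, hi₀⟩), ?_⟩
      rw [Finset.eq_singleton_iff_unique_mem]
      constructor
      · rw [Finset.mem_filter, hT, Finset.mem_filter]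
        exact ⟨⟨Finset.mem_univ _, hci₀⟩, rfl⟩
      · intro p hp
        rw [Finset.mem_filter, hT, Finset.mem_filter] at hp
        obtain ⟨⟨-, hpc⟩, hpu⟩ := hp
        have hval : (p.2 : ℕ) = i₀ := huniq (p.2 : ℕ) ⟨p.2.isLt, by rw [← hpu]; exact hpc⟩
        exact Prod.ext hpu (Fin.val_injective (by simpa using hval))
    rw [Finset.sum_congr rfl this]
    simp
  have h2 : T.card = S.card * m := by
    rw [Finset.card_eq_sum_card_fiberwise
      (f := fun p : Fin n × Fin m => p.1 + ((p.2 : ℕ) : Fin n)) (fun p _ => Finset.mem_univ _)]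
    have step : ∀ a ∈ (Finset.univ : Finset (Fin n)),
        (T.filter (fun p => p.1 + ((p.2 : ℕ) : Fin n) = a)).card
          = if c s(a, a + 1) = c₀ then m else 0 := by
      intro a _
      by_cases hca : c s(a, a + 1) = c₀
      · rw [if_pos hca]
        have hbij : (T.filter (fun p => p.1 + ((p.2 : ℕ) : Fin n) = a)).card
            = (Finset.univ : Finset (Fin m)).card := by
          refine Finset.card_nbij' (fun p => p.2) (fun i => (a - ((i : ℕ) : Fin n), i))
            ?_ ?_ ?_ ?_
          · intro p hp
            exact Finset.mem_univ _
          · intro i _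
            rw [Finset.mem_coe, Finset.mem_filter, hT, Finset.mem_filter]
            have hkey : a - ((i : ℕ) : Fin n) + ((i : ℕ) : Fin n) = a := sub_add_cancel a _
            refine ⟨⟨Finset.mem_univ _, ?_⟩, hkey⟩
            rw [hkey]
            exact hca
          · intro p hp
            rw [Finset.mem_coe, Finset.mem_filter] at hp
            exact Prod.ext (eq_sub_of_add_eq hp.2).symm rfl
          · intro i _
            rfl
        rw [hbij, Finset.card_univ, Fintype.card_fin]
      · rw [if_neg hca, Finset.card_eq_zero, Finset.filter_eq_empty_iff]
        intro p hp
        rw [hT, Finset.mem_filter] at hp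
        intro heq
        rw [heq] at hp
        exact hca hp.2
    rw [Finset.sum_congr rfl step, ← Finset.sum_filter, ← hS, Finset.sum_const, smul_eq_mul]
  rw [h1] at h2
  have hdvd : m ∣ n := ⟨S.card, by rw [mul_comm]; exact h2⟩
  have h5 : m ∣ n - 2 * m := Nat.dvd_sub hdvd (dvd_mul_left m 2)
  have h6 : n - 2 * m = 1 := by omega
  rw [h6] at h5
  have := Nat.le_of_dvd one_pos h5
  omega

theorem stmt_0 (n : ℕ) (hn : 4 ≤ n) : (cycleGraph n).src = (n + 1) / 2 := by
  haveI : NeZero n := ⟨by omega⟩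
  have hmem : (n + 1) / 2 ∈ {k : ℕ | ∃ c : Sym2 (Fin n) → Fin k,
      (cycleGraph n).IsStrongRainbowColoring c} := ⟨col hn, upper hn⟩
  have hub : (cycleGraph n).src ≤ (n + 1) / 2 := Nat.sInf_le hmem
  have hsrc_mem : (cycleGraph n).src ∈ {k : ℕ | ∃ c : Sym2 (Fin n) → Fin k,
      (cycleGraph n).IsStrongRainbowColoring c} := Nat.sInf_mem ⟨_, hmem⟩
  obtain ⟨c, hc⟩ := hsrc_mem
  have hlb : n / 2 ≤ (cycleGraph n).src := lower_half hn c hc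
  rcases Nat.even_or_odd n with he | ho
  · have h0 : n % 2 = 0 := Nat.even_iff.mp he
    omega
  · have h1 : n % 2 = 1 := Nat.odd_iff.mp ho
    have hne : (cycleGraph n).src ≠ n / 2 := fun h => lower_odd hn h1 c hc h
    omega
end

section
/- For every integer n ≥ 4, the rainbow connection number of the cycle C_n equals ⌈n/2⌉. -/
open SimpleGraph Finset

namespace RcCycleAux

open Fin.NatCast Fin.CommRing

variable {n : ℕ}

lemma val_one_eq [NeZero n] (hn : 2 ≤ n) : ((1 : Fin n)).val = 1 := by
  rw [Fin.val_one']
  exact Nat.mod_eq_of_lt (by omega)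

lemma cyc_adj [NeZero n] (hn : 2 ≤ n) (w : Fin n) : (cycleGraph n).Adj w (w + 1) := by
  rw [cycleGraph_adj']
  right
  have h1 : w + 1 - w = 1 := by ring
  rw [h1, val_one_eq hn]

/-- The forward arc of length `L` starting at `u` in the cycle graph. -/
def arcWalk [NeZero n] (hn : 2 ≤ n) (u : Fin n) :
    (L : ℕ) → (cycleGraph n).Walk u (u + (L : Fin n))
  | 0 => SimpleGraph.Walk.nil.copy rfl (by simp)
  | L + 1 => (((arcWalk hn u L).concat (cyc_adj hn _)).copy rfl (by push_cast; ring))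

lemma arcWalk_edges [NeZero n] (hn : 2 ≤ n) (u : Fin n) (L : ℕ) :
    (arcWalk hn u L).edges
      = (List.range L).map (fun (i : ℕ) => s(u + (i : Fin n), u + (i : Fin n) + 1)) := by
  induction L with
  | zero => simp [arcWalk]
  | succ L ih =>
    rw [arcWalk, SimpleGraph.Walk.edges_copy, SimpleGraph.Walk.edges_concat, ih,
      List.range_succ, List.map_append]
    simp

lemma arcWalk_support [NeZero n] (hn : 2 ≤ n) (u : Fin n) (L : ℕ) :
    (arcWalk hn u L).support = (List.range (L + 1)).map (fun (i : ℕ) => u + (i : Fin n)) := by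
  induction L with
  | zero => simp [arcWalk, List.range_succ]
  | succ L ih =>
    rw [arcWalk, SimpleGraph.Walk.support_copy, SimpleGraph.Walk.support_concat, ih]
    rw [List.range_succ (n := L + 1), List.map_append]
    simp [add_assoc]

lemma arcWalk_isPath [NeZero n] (hn : 2 ≤ n) (u : Fin n) {L : ℕ} (hL : L < n) :
    (arcWalk hn u L).IsPath := by
  rw [SimpleGraph.Walk.isPath_def, arcWalk_support]
  refine List.Nodup.map_on ?_ List.nodup_range
  intro x hx y hy hxy
  rw [List.mem_range] at hx hy
  have := congrArg Fin.val (add_left_cancel hxy)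
  rw [Fin.val_natCast, Fin.val_natCast, Nat.mod_eq_of_lt (by omega), Nat.mod_eq_of_lt (by omega)]
    at this
  exact this

/-- every walk in the cycle decomposes into `a` forward and `b` backward steps;
if all steps are forward it is the arc. -/
lemma walk_decomp [NeZero n] (hn : 2 ≤ n) {u v : Fin n} (p : (cycleGraph n).Walk u v) :
    ∃ a b : ℕ, a + b = p.length ∧ u + (a : Fin n) = v + (b : Fin n) ∧
      (b = 0 → p.edges
        = (List.range a).map (fun (i : ℕ) => s(u + (i : Fin n), u + (i : Fin n) + 1))) := by
  induction p with
  | nil => exact ⟨0, 0, rfl, rfl, fun _ => by simp⟩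
  | @cons u w v h q ih =>
    obtain ⟨a, b, hab, hcong, hedg⟩ := ih
    rcases (cycleGraph_adj'.mp h) with h1 | h1
    · -- u - w has val 1, i.e. u = w + 1 : backward step
      have hw : u = w + 1 := by
        have h2 : u - w = 1 := by
          apply Fin.ext; rw [h1, val_one_eq hn]
        rw [← h2]; ring
      refine ⟨a, b + 1, by rw [SimpleGraph.Walk.length_cons]; omega, ?_, by simp⟩
      rw [hw]
      push_cast
      rw [show w + 1 + (a : Fin n) = w + (a : Fin n) + 1 by ring, hcong]
      ring
    · -- w = u + 1 : forward step
      have hw : w = u + 1 := by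
        have h2 : w - u = 1 := by
          apply Fin.ext; rw [h1, val_one_eq hn]
        rw [← h2]; ring
      subst hw
      refine ⟨a + 1, b, by rw [SimpleGraph.Walk.length_cons]; omega, ?_, ?_⟩
      · push_cast
        rw [show u + ((a : Fin n) + 1) = u + 1 + (a : Fin n) by ring, hcong]
      · intro hb
        rw [SimpleGraph.Walk.edges_cons, hedg hb, List.range_succ_eq_map, List.map_cons,
          List.map_map]
        congr 1
        · push_cast; ring_nf
        · apply List.map_congr_left
          intro i _
          simp only [Function.comp_apply, Nat.succ_eq_add_one]
          push_cast
          congr 1 <;> ring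

lemma natCast_fin_inj [NeZero n] {a b : ℕ} (ha : a < n) (hb : b < n)
    (h : (a : Fin n) = (b : Fin n)) : a = b := by
  have := congrArg Fin.val h
  rwa [Fin.val_natCast, Fin.val_natCast, Nat.mod_eq_of_lt ha, Nat.mod_eq_of_lt hb] at this

/-- length of a rainbow walk is at most the number of colors -/
lemma rainbow_length_le {m : ℕ} {u v : Fin n} {c : Sym2 (Fin n) → Fin m}
    {p : (cycleGraph n).Walk u v} (h : (p.edges.map c).Nodup) : p.length ≤ m := by
  have := h.length_le_card
  simpa [SimpleGraph.Walk.length_edges] using this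

section Lower

lemma lower_bound (hn : 4 ≤ n) {m : ℕ} (c : Sym2 (Fin n) → Fin m)
    (hc : (cycleGraph n).IsRainbowColoring c) : (n + 1) / 2 ≤ m := by
  haveI : NeZero n := ⟨by omega⟩
  have hn2 : 2 ≤ n := by omega
  by_contra hm
  push_neg at hm
  rcases Nat.even_or_odd n with ⟨k0, hk0⟩ | ⟨k0, hk0⟩
  · -- even case: n = 2 * k0
    have hk02 : 2 ≤ k0 := by omega
    have hne : (0 : Fin n) ≠ ((k0 : ℕ) : Fin n) := by
      intro h
      have := congrArg Fin.val h
      rw [Fin.val_zero, Fin.val_natCast, Nat.mod_eq_of_lt (by omega)] at this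
      omega
    obtain ⟨p, hp, hnd⟩ := hc _ _ hne
    have hlen : p.length ≤ m := rainbow_length_le hnd
    obtain ⟨a, b, hab, hcong, -⟩ := walk_decomp hn2 p
    rw [zero_add] at hcong
    have : a = k0 + b := by
      apply natCast_fin_inj (n := n) (by omega) (by omega)
      rw [Nat.cast_add]
      exact hcong
    omega
  · -- odd case: n = 2 * k0 + 1
    have hk02 : 2 ≤ k0 := by omega
    have hm' : m ≤ k0 := by omega
    -- key : all length-k0 arcs are rainbow
    have key : ∀ u : Fin n,
        ((List.range k0).map
          (fun (i : ℕ) => c s(u + (i : Fin n), u + (i : Fin n) + 1))).Nodup := by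
      intro u
      have hne : u ≠ u + ((k0 : ℕ) : Fin n) := by
        intro h
        nth_rewrite 1 [← add_zero u] at h
        have := congrArg Fin.val (add_left_cancel h)
        rw [Fin.val_zero, Fin.val_natCast, Nat.mod_eq_of_lt (by omega)] at this
        omega
      obtain ⟨p, hp, hnd⟩ := hc _ _ hne
      have hlen : p.length ≤ m := rainbow_length_le hnd
      obtain ⟨a, b, hab, hcong, hedg⟩ := walk_decomp hn2 p
      have hacast : (a : Fin n) = ((k0 + b : ℕ) : Fin n) := by
        rw [add_assoc] at hcong
        have h2 := add_left_cancel hcong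
        rw [h2]; push_cast; ring
      have ha : a = k0 + b := natCast_fin_inj (by omega) (by omega) hacast
      have hb : b = 0 := by omega
      have ha' : a = k0 := by omega
      rw [hedg hb, ha'] at hnd
      rw [List.map_map] at hnd
      exact hnd
    -- m = k0
    have hmk : m = k0 := by
      have := (key 0).length_le_card
      simp only [List.length_map, List.length_range, Fintype.card_fin] at this
      omega
    -- step: colors repeat with period k0
    have step : ∀ u : Fin n,
        c s(u, u + 1) = c s(u + ((k0 : ℕ) : Fin n), u + ((k0 : ℕ) : Fin n) + 1) := by
      intro u
      set f : ℕ → Fin m := fun (i : ℕ) => c s(u + (i : Fin n), u + (i : Fin n) + 1) with hf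
      have hknodup : ((List.range k0).map f).Nodup := by
        rw [hf]; exact key u
      -- f k0 must appear among f 0, ..., f (k0 - 1)
      have hmem : f k0 ∈ (List.range k0).map f := by
        by_contra hmem
        have hnd : (f k0 :: (List.range k0).map f).Nodup := List.nodup_cons.mpr ⟨hmem, hknodup⟩
        have hle := hnd.length_le_card
        simp only [List.length_cons, List.length_map, List.length_range,
          Fintype.card_fin] at hle
        omega
      obtain ⟨j, hj, hjf⟩ := List.mem_map.mp hmem
      rw [List.mem_range] at hj
      -- show j = 0 using nodupness of the arc starting at u + 1
      rcases Nat.eq_zero_or_pos j with hj0 | hj0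
      · rw [hj0] at hjf
        rw [hf] at hjf
        simp only [Nat.cast_zero, add_zero] at hjf
        exact hjf
      · exfalso
        have hinj := List.inj_on_of_nodup_map (key (u + 1))
        have he1 : u + 1 + ((j - 1 : ℕ) : Fin n) = u + (j : Fin n) := by
          rw [Nat.cast_sub (by omega)]
          push_cast
          ring
        have he2 : u + 1 + ((k0 - 1 : ℕ) : Fin n) = u + ((k0 : ℕ) : Fin n) := by
          rw [Nat.cast_sub (by omega)]
          push_cast
          ring
        have hfe : (fun (i : ℕ) => c s(u + 1 + (i : Fin n), u + 1 + (i : Fin n) + 1)) (j - 1)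
            = (fun (i : ℕ) => c s(u + 1 + (i : Fin n), u + 1 + (i : Fin n) + 1)) (k0 - 1) := by
          simp only [he1, he2]
          rw [hf] at hjf
          simp only at hjf
          rw [hjf]
        have := hinj (List.mem_range.mpr (by omega)) (List.mem_range.mpr (by omega)) hfe
        omega
    -- iterate the step
    have iter : ∀ t : ℕ, ∀ u : Fin n, c s(u, u + 1)
        = c s(u + ((t * k0 : ℕ) : Fin n), u + ((t * k0 : ℕ) : Fin n) + 1) := by
      intro t
      induction t with
      | zero => intro u; simp
      | succ t ih =>
        intro u
        rw [ih u, step (u + ((t * k0 : ℕ) : Fin n))]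
        have h3 : u + ((t * k0 : ℕ) : Fin n) + ((k0 : ℕ) : Fin n)
            = u + (((t + 1) * k0 : ℕ) : Fin n) := by push_cast; ring
        rw [h3]
    -- choose t = 2*k0 - 1 : t * k0 ≡ 1 mod n
    have hcast1 : (((2 * k0 - 1) * k0 : ℕ) : Fin n) = ((1 : ℕ) : Fin n) := by
      apply Fin.ext
      rw [Fin.val_natCast, Fin.val_natCast]
      have h1 : (2 * k0 - 1) * k0 = 1 + (k0 - 1) * n := by
        obtain ⟨K, hK⟩ : ∃ K, k0 = K + 2 := ⟨k0 - 2, by omega⟩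
        subst hK
        have e1 : 2 * (K + 2) - 1 = 2 * K + 3 := by omega
        have e2 : K + 2 - 1 = K + 1 := by omega
        rw [e1, e2, hk0]
        ring
      rw [h1, Nat.add_mul_mod_self_right]
    have heq := iter (2 * k0 - 1) 0
    rw [hcast1] at heq
    -- but the arc from 0 is rainbow : c s(0,1) ≠ c s(1,2)
    have hinj := List.inj_on_of_nodup_map (key 0)
    have : (0 : ℕ) = 1 := by
      apply hinj (List.mem_range.mpr (by omega)) (List.mem_range.mpr (by omega))
      simp only [Nat.cast_zero, Nat.cast_one, add_zero, zero_add]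
      convert heq using 3 <;> push_cast <;> ring
    omega

end Lower

section Upper

/-- the `i`-th edge gets color `i` (to be taken mod `(n+1)/2`). -/
def cycCol [NeZero n] (hn : 3 ≤ n) : Sym2 (Fin n) → ℕ :=
  Sym2.lift ⟨fun a b => if b = a + 1 then a.val else if a = b + 1 then b.val else 0, by
    intro a b
    dsimp only
    split_ifs with h1 h2 h3 h4
    · exfalso
      have h3 : a = a + (1 + 1) := by rw [← add_assoc]; nth_rewrite 1 [h2, h1]; rfl
      nth_rewrite 1 [← add_zero a] at h3
      have h4 := congrArg Fin.val (add_left_cancel h3)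
      rw [Fin.val_zero, Fin.val_add, val_one_eq (show 2 ≤ n by omega),
        Nat.mod_eq_of_lt (by omega)] at h4
      exact absurd h4 (by omega)
    all_goals rfl⟩

lemma cycCol_edge [NeZero n] (hn : 3 ≤ n) (u : Fin n) : cycCol hn s(u, u + 1) = u.val := by
  rw [cycCol, Sym2.lift_mk]
  simp

/-- the arithmetic core of the upper bound -/
lemma arith_core (hn : 4 ≤ n) {U i j L : ℕ} (hU : U < n) (hij : i < j) (hj : j < L)
    (hL : 2 * L ≤ n)
    (h : ((U + i) % n) % ((n + 1) / 2) = ((U + j) % n) % ((n + 1) / 2)) : False := by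
  set k := (n + 1) / 2 with hk
  have hx : (U + i < n ∧ (U + i) % n = U + i) ∨ (n ≤ U + i ∧ (U + i) % n = U + i - n) := by
    rcases Nat.lt_or_ge (U + i) n with h' | h'
    · exact Or.inl ⟨h', Nat.mod_eq_of_lt h'⟩
    · exact Or.inr ⟨h', by rw [Nat.mod_eq_sub_mod h', Nat.mod_eq_of_lt (by omega)]⟩
  have hy : (U + j < n ∧ (U + j) % n = U + j) ∨ (n ≤ U + j ∧ (U + j) % n = U + j - n) := by
    rcases Nat.lt_or_ge (U + j) n with h' | h'
    · exact Or.inl ⟨h', Nat.mod_eq_of_lt h'⟩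
    · exact Or.inr ⟨h', by rw [Nat.mod_eq_sub_mod h', Nat.mod_eq_of_lt (by omega)]⟩
  have hmodcase : ∀ x : ℕ, x < n →
      (x < k ∧ x % k = x) ∨ (k ≤ x ∧ x % k = x - k) := by
    intro x hxn
    rcases Nat.lt_or_ge x k with h' | h'
    · exact Or.inl ⟨h', Nat.mod_eq_of_lt h'⟩
    · exact Or.inr ⟨h', by rw [Nat.mod_eq_sub_mod h', Nat.mod_eq_of_lt (by omega)]⟩
  have hmx := hmodcase ((U + i) % n) (Nat.mod_lt _ (by omega))
  have hmy := hmodcase ((U + j) % n) (Nat.mod_lt _ (by omega))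
  omega

lemma upper_bound (hn : 4 ≤ n) :
    ∃ c : Sym2 (Fin n) → Fin ((n + 1) / 2), (cycleGraph n).IsRainbowColoring c := by
  haveI : NeZero n := ⟨by omega⟩
  haveI : NeZero ((n + 1) / 2) := ⟨by omega⟩
  have hn2 : 2 ≤ n := by omega
  have hn3 : 3 ≤ n := by omega
  set c : Sym2 (Fin n) → Fin ((n + 1) / 2) :=
    fun e => ((cycCol hn3 e : ℕ) : Fin ((n + 1) / 2)) with hcdef
  refine ⟨c, ?_⟩
  -- rainbowness of short arcs
  have harc : ∀ (w : Fin n) (L : ℕ), 2 * L ≤ n →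
      (((arcWalk hn2 w L).edges.map c).Nodup) := by
    intro w L hL
    rw [arcWalk_edges, List.map_map]
    refine List.Nodup.map_on ?_ List.nodup_range
    intro x hx y hy hxy
    rw [List.mem_range] at hx hy
    simp only [Function.comp_apply, hcdef] at hxy
    rw [cycCol_edge hn3, cycCol_edge hn3] at hxy
    have hval := congrArg Fin.val hxy
    rw [Fin.val_natCast, Fin.val_natCast] at hval
    have hvx : (w + (x : Fin n)).val = (w.val + x) % n := by
      rw [Fin.val_add, Fin.val_natCast, Nat.mod_eq_of_lt (a := x) (by omega)]
    have hvy : (w + (y : Fin n)).val = (w.val + y) % n := by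
      rw [Fin.val_add, Fin.val_natCast, Nat.mod_eq_of_lt (a := y) (by omega)]
    rw [hvx, hvy] at hval
    rcases Nat.lt_trichotomy x y with h' | h' | h'
    · exact absurd hval (fun hh => arith_core hn w.isLt h' hy hL hh)
    · exact h'
    · exact absurd hval.symm (fun hh => arith_core hn w.isLt h' hx hL hh)
  intro u v huv
  rcases le_or_gt (2 * (v - u).val) n with hshort | hshort
  · -- forward arc from u to v
    have hvu : u + (((v - u).val : ℕ) : Fin n) = v := by
      rw [Fin.cast_val_eq_self]; ring
    refine ⟨(arcWalk hn2 u (v - u).val).copy rfl hvu, ?_, ?_⟩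
    · exact (SimpleGraph.Walk.isPath_copy _ rfl hvu).mpr (arcWalk_isPath hn2 u (Fin.is_lt _))
    · rw [SimpleGraph.Walk.edges_copy]
      exact harc u _ hshort
  · -- backward : forward arc from v to u, reversed
    have hsum : (v - u).val + (u - v).val = n := by
      have h0 : (v - u) + (u - v) = 0 := by ring
      have hval := congrArg Fin.val h0
      rw [Fin.val_add, Fin.val_zero] at hval
      have h1 : (v - u).val ≠ 0 := by
        intro h
        apply huv
        have : v - u = 0 := Fin.ext (by rw [h, Fin.val_zero])
        have := congrArg (· + u) this
        simpa [sub_add_cancel] using this.symm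
      have h2 : (v - u).val < n := Fin.is_lt _
      have h3 : (u - v).val < n := Fin.is_lt _
      have h1' : 0 < (v - u).val := Nat.pos_of_ne_zero h1
      have h5 : 0 < (v - u).val + (u - v).val := by omega
      have hdvd := Nat.dvd_of_mod_eq_zero hval
      have h6 := Nat.le_of_dvd h5 hdvd
      have h7 : ((v - u).val + (u - v).val) % n = (v - u).val + (u - v).val - n := by
        rw [Nat.mod_eq_sub_mod h6, Nat.mod_eq_of_lt (by omega)]
      omega
    have huv' : v + (((u - v).val : ℕ) : Fin n) = u := by
      rw [Fin.cast_val_eq_self]; ring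
    refine ⟨((arcWalk hn2 v (u - v).val).copy rfl huv').reverse, ?_, ?_⟩
    · exact ((SimpleGraph.Walk.isPath_copy _ rfl huv').mpr
        (arcWalk_isPath hn2 v (Fin.is_lt _))).reverse
    · rw [SimpleGraph.Walk.edges_reverse, List.map_reverse, List.nodup_reverse,
        SimpleGraph.Walk.edges_copy]
      exact harc v _ (by omega)

end Upper

end RcCycleAux

theorem stmt_1 (n : ℕ) (hn : 4 ≤ n) : (cycleGraph n).rc = (n + 1) / 2 := by
  have hmem : (n + 1) / 2 ∈ {k : ℕ | ∃ c : Sym2 (Fin n) → Fin k,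
      (cycleGraph n).IsRainbowColoring c} := RcCycleAux.upper_bound hn
  refine le_antisymm (Nat.sInf_le hmem) (le_csInf ⟨_, hmem⟩ ?_)
  rintro m ⟨c, hc⟩
  exact RcCycleAux.lower_bound hn c hc
end

section
/- For every integer n ≥ 3, src(C_n □ C_2) = ⌈(n+1)/2⌉. -/
open SimpleGraph Finset

namespace PrismSrc

open Fin.CommRing

open SimpleGraph

variable {V : Type*} {G : SimpleGraph V}

/-- Build a walk from a vertex sequence. -/
def mkWalk (G : SimpleGraph V) (f : ℕ → V) : (d : ℕ) → (∀ i, i < d → G.Adj (f i) (f (i+1))) → G.Walk (f 0) (f d)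
  | 0, _ => Walk.nil
  | d+1, h => (mkWalk G f d fun i hi => h i (by omega)).concat (h d (by omega))

@[simp] lemma mkWalk_length (f : ℕ → V) (d : ℕ) (h) : (mkWalk G f d h).length = d := by
  induction d with
  | zero => rfl
  | succ d ih => simp [mkWalk, Walk.length_concat, ih]

lemma mkWalk_edges (f : ℕ → V) (d : ℕ) (h) :
    (mkWalk G f d h).edges = (List.range d).map (fun i => s(f i, f (i+1))) := by
  induction d with
  | zero => rfl
  | succ d ih => simp [mkWalk, Walk.edges_concat, ih, List.range_succ]

lemma walk_ge (φ : V → ℕ) (hφ : ∀ a b, G.Adj a b → φ b ≤ φ a + 1) :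
    ∀ {u v : V} (p : G.Walk u v), φ v ≤ φ u + p.length := by
  intro u v p
  induction p with
  | nil => simp
  | @cons u w v h q ih =>
      have := hφ u w h
      simp only [Walk.length_cons]
      omega

lemma modc {N x : ℕ} (h0 : 0 < N) (h : x < 2*N) : x % N = if x < N then x else x - N := by
  split_ifs with h1
  · exact Nat.mod_eq_of_lt h1
  · rw [Nat.mod_eq_sub_mod (le_of_not_gt h1), Nat.mod_eq_of_lt (by omega)]

lemma dvd_two_mul_le {M x : ℕ} (h : M ∣ x) (h1 : M < x) : 2*M ≤ x := by
  obtain ⟨q, rfl⟩ := h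
  have hq2 : 2 ≤ q := by
    by_contra hq
    interval_cases q <;> omega
  calc 2*M = M*2 := by ring
  _ ≤ M*q := Nat.mul_le_mul_left M hq2

/-- Colors of two edges in a window of at most `n/2` consecutive cycle edges differ. -/
lemma ec_window {n : ℕ} (hn : 3 ≤ n) {a s t : ℕ} (hst : s < t) (ht : t < n/2) :
    (a + s) % n % ((n+1)/2) ≠ (a + t) % n % ((n+1)/2) := by
  intro hEq
  set M := (n+1)/2 with hM
  have hn0 : 0 < n := by omega
  set A := (a+s) % n with hA
  have hAn : A < n := Nat.mod_lt _ hn0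
  set e := t - s with he
  have he1 : 1 ≤ e := by omega
  have he2 : e ≤ n/2 - 1 := by omega
  have hB : (a+t) % n = (A + e) % n := by
    rw [hA, Nat.mod_add_mod]; congr 1; omega
  rw [hB, modc hn0 (by omega)] at hEq
  split_ifs at hEq with hlt
  · have hdvd : M ∣ e := by
      have h2 := (Nat.modEq_iff_dvd' (Nat.le_add_right A e)).mp hEq
      simpa using h2
    have := Nat.le_of_dvd (by omega) hdvd
    omega
  · have hle : A + e - n ≤ A := by omega
    have hdvd : M ∣ A - (A+e-n) := (Nat.modEq_iff_dvd' hle).mp hEq.symm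
    have h3 : A - (A+e-n) = n - e := by omega
    rw [h3] at hdvd
    have := dvd_two_mul_le hdvd (by omega)
    omega

def ecV (n : ℕ) (i : Fin n) : Fin (n/2+1) :=
  ⟨i.val % ((n+1)/2), by have h := i.isLt; exact lt_of_lt_of_le (Nat.mod_lt _ (by omega)) (by omega)⟩

def rungV (n : ℕ) (i : Fin n) : Fin (n/2+1) :=
  if h : n % 2 = 1 ∧ 1 ≤ i.val ∧ i.val ≤ n/2+1 then ⟨i.val - 1, by omega⟩ else ⟨n/2, by omega⟩

lemma val_add_nat {n : ℕ} [NeZero n] (a : Fin n) {i : ℕ} (hi : i < n) :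
    (a + (i : Fin n)).val = (a.val + i) % n := by
  rw [Fin.add_def, Fin.val_natCast, Nat.mod_eq_of_lt hi]

lemma ec_window' {n : ℕ} [NeZero n] (hn : 3 ≤ n) (b : Fin n) {s t : ℕ} (hst : s < t) (ht : t < n/2) :
    (ecV n (b + (s : Fin n))).val ≠ (ecV n (b + (t : Fin n))).val := by
  show (b + (s:Fin n)).val % ((n+1)/2) ≠ (b + (t:Fin n)).val % ((n+1)/2)
  rw [val_add_nat b (by omega), val_add_nat b (by omega)]
  exact ec_window hn hst ht

lemma rung_avoid {n : ℕ} [NeZero n] (hn : 3 ≤ n) (b : Fin n) {s : ℕ} (hs : s < n/2) :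
    (ecV n (b + (s : Fin n))).val ≠ (rungV n b).val := by
  have hbn := b.isLt
  show (b + (s:Fin n)).val % ((n+1)/2) ≠ (rungV n b).val
  rw [val_add_nat b (by omega), modc (N := n) (by omega) (by omega)]
  unfold rungV
  split_ifs <;>
    rw [modc (N := (n+1)/2) (by omega) (by omega)] <;>
    split_ifs <;> simp only [Fin.val_mk] <;> omega
def pcc (n : ℕ) (u v : Fin n × Fin 2) : Fin (n/2+1) :=
  if u.2 = v.2 then
    if (v.1 - u.1).val = 1 ∧ ¬ (u.1 - v.1).val = 1 then ecV n u.1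
    else if (u.1 - v.1).val = 1 ∧ ¬ (v.1 - u.1).val = 1 then ecV n v.1
    else ⟨0, by omega⟩
  else if u.1 = v.1 then rungV n u.1 else ⟨0, by omega⟩

lemma pcc_symm (n : ℕ) (u v : Fin n × Fin 2) : pcc n u v = pcc n v u := by
  unfold pcc
  rcases eq_or_ne u.2 v.2 with h2 | h2
  · rw [if_pos h2, if_pos h2.symm]
    by_cases hP : (v.1 - u.1).val = 1 <;> by_cases hQ : (u.1 - v.1).val = 1 <;>
      simp [hP, hQ]
  · rw [if_neg h2, if_neg (Ne.symm h2)]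
    rcases eq_or_ne u.1 v.1 with h1 | h1
    · rw [if_pos h1, if_pos h1.symm, h1]
    · rw [if_neg h1, if_neg (Ne.symm h1)]

def colr (n : ℕ) : Sym2 (Fin n × Fin 2) → Fin (n/2+1) :=
  Sym2.lift ⟨pcc n, pcc_symm n⟩

lemma val_one_of {n : ℕ} [NeZero n] (hn : 3 ≤ n) : (1 : Fin n).val = 1 := by
  rw [Fin.val_one', Nat.mod_eq_of_lt (by omega)]

lemma val_neg_one {n : ℕ} [NeZero n] (hn : 3 ≤ n) : (-1 : Fin n).val = n - 1 := by
  have h1 := val_one_of (n := n) hn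
  rw [Fin.neg_def]
  simp only [Fin.val_mk, h1]
  exact Nat.mod_eq_of_lt (by omega)

lemma colr_horiz {n : ℕ} [NeZero n] (hn : 3 ≤ n) (z : Fin n) (x : Fin 2) :
    colr n s((z, x), (z + 1, x)) = ecV n z := by
  have hP : ((z+1 : Fin n) - z).val = 1 := by
    rw [add_sub_cancel_left, val_one_of hn]
  have hQ : (z - (z+1) : Fin n).val = n - 1 := by
    have : z - (z+1) = -1 := by ring
    rw [this, val_neg_one hn]
  show pcc n (z, x) (z+1, x) = ecV n z
  unfold pcc
  rw [if_pos rfl, if_pos ⟨hP, by rw [hQ]; omega⟩]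

lemma colr_horiz' {n : ℕ} [NeZero n] (hn : 3 ≤ n) (z : Fin n) (x : Fin 2) :
    colr n s((z + 1, x), (z, x)) = ecV n z := by
  rw [Sym2.eq_swap]; exact colr_horiz hn z x

lemma colr_vert {n : ℕ} (z : Fin n) {x y : Fin 2} (hxy : x ≠ y) :
    colr n s((z, x), (z, y)) = rungV n z := by
  show pcc n (z, x) (z, y) = rungV n z
  unfold pcc
  rw [if_neg hxy, if_pos rfl]
def dC (n : ℕ) (a b : Fin n) : ℕ := min (b - a).val (a - b).val

lemma dC_self {n : ℕ} (a : Fin n) : dC n a a = 0 := by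
  have h : (a - a).val = 0 := by
    rw [Fin.sub_def]
    simp [Nat.add_sub_cancel' (le_of_lt a.isLt)]
  simp [dC, h]

lemma val_sub_rev {n : ℕ} [NeZero n] (a b : Fin n) : (a - b).val = (n - (b - a).val) % n := by
  have h : a - b = -(b - a) := by ring
  rw [h, Fin.neg_def, Fin.val_mk]

lemma dC_eq_of_le {n : ℕ} [NeZero n] (hn : 3 ≤ n) {a b : Fin n} (h : (b - a).val ≤ n/2) :
    dC n a b = (b - a).val := by
  have hu : (b - a).val < n := (b - a).isLt
  rw [dC, val_sub_rev a b, modc (N := n) (by omega) (by omega)]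
  split_ifs <;> omega

lemma dC_eq_of_gt {n : ℕ} [NeZero n] (hn : 3 ≤ n) {a b : Fin n} (h : n/2 < (b - a).val) :
    dC n a b = n - (b - a).val := by
  have hu : (b - a).val < n := (b - a).isLt
  rw [dC, val_sub_rev a b, modc (N := n) (by omega) (by omega)]
  split_ifs <;> omega

lemma min_lip {n u w : ℕ} (hn : 3 ≤ n) (hu : u < n)
    (hw : w = (u + 1) % n ∨ w = (u + (n - 1)) % n) :
    min w ((n - w) % n) ≤ min u ((n - u) % n) + 1 := by
  rcases hw with rfl | rfl <;>
  · rw [modc (N := n) (by omega) (by omega)]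
    split_ifs with h1 <;>
      rw [modc (N := n) (by omega) (by omega), modc (N := n) (by omega) (by omega)] <;>
      split_ifs <;> omega

lemma dC_lip {n : ℕ} [NeZero n] (hn : 3 ≤ n) (a : Fin n) {c c' : Fin n}
    (h : (cycleGraph n).Adj c c') : dC n a c' ≤ dC n a c + 1 := by
  rw [cycleGraph_adj'] at h
  have key : (c' - a).val = ((c - a).val + 1) % n ∨
      (c' - a).val = ((c - a).val + (n - 1)) % n := by
    rcases h with h | h
    · right
      have hc : c' = c - 1 := by
        have h2 : c - c' = 1 := Fin.ext (by rw [h, val_one_of hn])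
        have := sub_eq_iff_eq_add.mp h2
        rw [this]; ring
      subst hc
      have h3 : c - 1 - a = (c - a) - 1 := by ring
      rw [h3, Fin.sub_def, Fin.val_mk, val_one_of hn, Nat.add_comm]
    · left
      have hc : c' = c + 1 := by
        have h2 : c' - c = 1 := Fin.ext (by rw [h, val_one_of hn])
        have := sub_eq_iff_eq_add.mp h2
        rw [this]; ring
      subst hc
      have h3 : c + 1 - a = (c - a) + 1 := by ring
      rw [h3, Fin.add_def, val_one_of hn]
  rw [dC, dC, val_sub_rev a c', val_sub_rev a c]
  exact min_lip hn (c - a).isLt key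

lemma prism_dist_ge {n : ℕ} [NeZero n] (hn : 3 ≤ n) (a b : Fin n) (x y : Fin 2)
    {p : (cycleGraph n □ cycleGraph 2).Walk (a, x) (b, y)} :
    dC n a b + (if x = y then 0 else 1) ≤ p.length := by
  have hφ : ∀ u v : Fin n × Fin 2, (cycleGraph n □ cycleGraph 2).Adj u v →
      (dC n a v.1 + (if x = v.2 then 0 else 1)) ≤ (dC n a u.1 + (if x = u.2 then 0 else 1)) + 1 := by
    rintro ⟨p1, p2⟩ ⟨q1, q2⟩ h
    rw [boxProd_adj] at h
    rcases h with ⟨h, h2⟩ | ⟨h, h2⟩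
    · dsimp only at h h2 ⊢
      subst h2
      have := dC_lip hn a h
      omega
    · dsimp only at h h2 ⊢
      subst h2
      have h3 : (if x = p2 then 0 else 1) ≤ 1 := by split_ifs <;> omega
      have h4 : (if x = q2 then (0:ℕ) else 1) ≤ 1 := by split_ifs <;> omega
      omega
  have hw := walk_ge (fun w => dC n a w.1 + (if x = w.2 then 0 else 1)) hφ p
  dsimp only at hw
  rw [dC_self, if_pos rfl] at hw
  omega
lemma adj_fwd {n : ℕ} [NeZero n] (hn : 3 ≤ n) (z : Fin n) : (cycleGraph n).Adj z (z + 1) := by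
  rw [cycleGraph_adj']
  right
  rw [add_sub_cancel_left]
  exact val_one_of hn

lemma adj_vert {n : ℕ} (z : Fin n) {x y : Fin 2} (hxy : x ≠ y) :
    (cycleGraph n □ cycleGraph 2).Adj (z, x) (z, y) := by
  apply boxProd_adj_right.mpr
  rw [cycleGraph_two_eq_top]
  simpa using hxy

lemma nodup_of_colors {k D : ℕ} {g : ℕ → Fin k} (hg : ∀ i j, i < j → j < D → g i ≠ g j) :
    ((List.range D).map g).Nodup := by
  apply List.Nodup.map_on _ (List.nodup_range)
  intro i hi j hj hEq
  rw [List.mem_range] at hi hj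
  by_contra hij
  rcases Nat.lt_or_ge i j with h | h
  · exact hg i j h hj hEq
  · exact hg j i (by omega) hi hEq.symm

lemma cast_succ_fin {n : ℕ} [NeZero n] (i : ℕ) : ((i + 1 : ℕ) : Fin n) = (i : Fin n) + 1 := by
  push_cast; ring

lemma gw_fwd {n : ℕ} [NeZero n] (hn : 3 ≤ n) (a b : Fin n) (x : Fin 2) (ht : (b - a).val ≤ n/2) :
    ∃ p : (cycleGraph n □ cycleGraph 2).Walk (a, x) (b, x),
      p.length = (b - a).val ∧ ((p.edges.map (colr n)).Nodup) := by
  set t := (b - a).val with htdef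
  set f : ℕ → Fin n × Fin 2 := fun i => (a + ((i : ℕ) : Fin n), x) with hfdef
  have hfeq : ∀ i : ℕ, f (i+1) = (a + ((i:ℕ) : Fin n) + 1, x) := by
    intro i
    show (a + ((i+1 : ℕ) : Fin n), x) = _
    rw [cast_succ_fin, ← add_assoc]
  have hadj : ∀ i, i < t → (cycleGraph n □ cycleGraph 2).Adj (f i) (f (i+1)) := by
    intro i hi
    rw [hfeq i]
    exact boxProd_adj_left.mpr (adj_fwd hn _)
  have h0 : f 0 = (a, x) := by simp [hfdef]
  have hend : f t = (b, x) := by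
    show (a + ((t : ℕ) : Fin n), x) = _
    rw [htdef, Fin.cast_val_eq_self, show a + (b - a) = b by ring]
  refine ⟨(mkWalk _ f t hadj).copy (by rw [h0]) (by rw [hend]), ?_, ?_⟩
  · simp
  · rw [Walk.edges_copy, mkWalk_edges, List.map_map]
    apply nodup_of_colors
    intro i j hij hj
    dsimp only [Function.comp]
    have hcol : ∀ l : ℕ, colr n s(f l, f (l+1)) = ecV n (a + ((l:ℕ) : Fin n)) := by
      intro l
      rw [hfeq l]
      exact colr_horiz hn _ x
    rw [hcol i, hcol j]
    intro hEq
    exact ec_window' hn a hij (by omega) (congrArg Fin.val hEq)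

lemma gw_bwd {n : ℕ} [NeZero n] (hn : 3 ≤ n) (a b : Fin n) (x : Fin 2) (ht : n/2 < (b - a).val) :
    ∃ p : (cycleGraph n □ cycleGraph 2).Walk (a, x) (b, x),
      p.length = n - (b - a).val ∧ ((p.edges.map (colr n)).Nodup) := by
  set t := (b - a).val with htdef
  have htn : t < n := (b - a).isLt
  set d := n - t with hddef
  have hdm : d ≤ n/2 := by omega
  have hcd : ((d : ℕ) : Fin n) = a - b := by
    rw [hddef, Nat.cast_sub (by omega), Fin.natCast_self, htdef, Fin.cast_val_eq_self]
    ring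
  set f : ℕ → Fin n × Fin 2 := fun i => (a - ((i : ℕ) : Fin n), x) with hfdef
  have hfeq : ∀ i : ℕ, f (i+1) = (a - ((i:ℕ) : Fin n) - 1, x) := by
    intro i
    show (a - ((i+1 : ℕ) : Fin n), x) = _
    rw [cast_succ_fin, show a - (((i:ℕ) : Fin n) + 1) = a - ((i:ℕ) : Fin n) - 1 by ring]
  have hadj : ∀ i, i < d → (cycleGraph n □ cycleGraph 2).Adj (f i) (f (i+1)) := by
    intro i hi
    rw [hfeq i]
    have := (boxProd_adj_left (G := cycleGraph n) (H := cycleGraph 2) (b := x)).mpr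
      (adj_fwd hn ((a - ((i:ℕ) : Fin n)) - 1))
    rw [sub_add_cancel] at this
    exact ((cycleGraph n □ cycleGraph 2).adj_symm this)
  have h0 : f 0 = (a, x) := by simp [hfdef]
  have hend : f d = (b, x) := by
    show (a - ((d : ℕ) : Fin n), x) = _
    rw [hcd, show a - (a - b) = b by ring]
  have hbase : ∀ i : ℕ, i < d → a - ((i:ℕ) : Fin n) - 1 = b + ((d - 1 - i : ℕ) : Fin n) := by
    intro i hi
    have h1 : ((d - 1 - i : ℕ) : Fin n) = ((d : ℕ) : Fin n) - ((i+1 : ℕ) : Fin n) := by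
      rw [show d - 1 - i = d - (i+1) by omega, Nat.cast_sub (by omega)]
    rw [h1, hcd, cast_succ_fin]; ring
  refine ⟨(mkWalk _ f d hadj).copy (by rw [h0]) (by rw [hend]), ?_, ?_⟩
  · simp
  · rw [Walk.edges_copy, mkWalk_edges, List.map_map]
    apply nodup_of_colors
    intro i j hij hj
    dsimp only [Function.comp]
    have hcol : ∀ l, l < d → colr n s(f l, f (l+1)) = ecV n (b + ((d - 1 - l : ℕ) : Fin n)) := by
      intro l hl
      have h1 : f l = ((a - ((l:ℕ) : Fin n) - 1) + 1, x) := by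
        show (a - ((l:ℕ) : Fin n), x) = _
        rw [sub_add_cancel]
      rw [hfeq l, h1, colr_horiz' hn _ x, hbase l hl]
    rw [hcol i (by omega), hcol j (by omega)]
    intro hEq
    have hne : d - 1 - j < d - 1 - i := by omega
    exact ec_window' hn b hne (by omega) (congrArg Fin.val hEq).symm

lemma gw_fwd' {n : ℕ} [NeZero n] (hn : 3 ≤ n) (a b : Fin n) {x y : Fin 2} (hxy : x ≠ y)
    (ht : (b - a).val ≤ n/2) :
    ∃ p : (cycleGraph n □ cycleGraph 2).Walk (a, x) (b, y),
      p.length = (b - a).val + 1 ∧ ((p.edges.map (colr n)).Nodup) := by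
  set t := (b - a).val with htdef
  set f : ℕ → Fin n × Fin 2 := fun i => if i = 0 then (a, x) else (a + ((i-1 : ℕ) : Fin n), y)
    with hfdef
  have hadj : ∀ i, i < t + 1 → (cycleGraph n □ cycleGraph 2).Adj (f i) (f (i+1)) := by
    intro i hi
    rcases Nat.eq_zero_or_pos i with rfl | hpos
    · show (cycleGraph n □ cycleGraph 2).Adj (a, x) (f 1)
      have : f 1 = (a, y) := by simp [hfdef]
      rw [this]
      exact adj_vert a hxy
    · have h1 : f i = (a + ((i-1 : ℕ) : Fin n), y) := by simp [hfdef, Nat.pos_iff_ne_zero.mp hpos]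
      have h2 : f (i+1) = (a + ((i : ℕ) : Fin n), y) := by simp [hfdef]
      rw [h1, h2, show ((i:ℕ) : Fin n) = ((i-1:ℕ) : Fin n) + 1 by
        rw [← cast_succ_fin]; congr 1; omega, ← add_assoc]
      exact boxProd_adj_left.mpr (adj_fwd hn _)
  have hend : f (t + 1) = (b, y) := by
    have : f (t+1) = (a + ((t : ℕ) : Fin n), y) := by simp [hfdef]
    rw [this, htdef, Fin.cast_val_eq_self, show a + (b - a) = b by ring]
  have h0 : f 0 = (a, x) := by simp [hfdef]
  refine ⟨(mkWalk _ f (t+1) hadj).copy (by rw [h0]) (by rw [hend]), ?_, ?_⟩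
  · simp
  · rw [Walk.edges_copy, mkWalk_edges, List.map_map]
    apply nodup_of_colors
    intro i j hij hj
    dsimp only [Function.comp]
    have hcol : ∀ l, 0 < l → l < t + 1 → colr n s(f l, f (l+1)) = ecV n (a + ((l-1 : ℕ) : Fin n)) := by
      intro l hl hl2
      have h1 : f l = (a + ((l-1 : ℕ) : Fin n), y) := by simp [hfdef, Nat.pos_iff_ne_zero.mp hl]
      have h2 : f (l+1) = (a + ((l : ℕ) : Fin n), y) := by simp [hfdef]
      rw [h1, h2, show ((l:ℕ) : Fin n) = ((l-1:ℕ) : Fin n) + 1 by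
        rw [← cast_succ_fin]; congr 1; omega, ← add_assoc]
      exact colr_horiz hn _ y
    have hcol0 : colr n s(f 0, f 1) = rungV n a := by
      have h1 : f 1 = (a, y) := by simp [hfdef]
      rw [h0, h1]
      exact colr_vert a hxy
    rcases Nat.eq_zero_or_pos i with rfl | hpos
    · rw [show (0:ℕ)+1 = 1 by rfl] at *
      rw [hcol0, hcol j hij (by omega)]
      intro hEq
      exact rung_avoid hn a (s := j - 1) (by omega) (congrArg Fin.val hEq).symm
    · rw [hcol i hpos (by omega), hcol j (by omega) (by omega)]
      intro hEq
      exact ec_window' hn a (show i - 1 < j - 1 by omega) (by omega) (congrArg Fin.val hEq)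

lemma gw_bwd' {n : ℕ} [NeZero n] (hn : 3 ≤ n) (a b : Fin n) {x y : Fin 2} (hxy : x ≠ y)
    (ht : n/2 < (b - a).val) :
    ∃ p : (cycleGraph n □ cycleGraph 2).Walk (a, x) (b, y),
      p.length = (n - (b - a).val) + 1 ∧ ((p.edges.map (colr n)).Nodup) := by
  set t := (b - a).val with htdef
  have htn : t < n := (b - a).isLt
  set d := n - t with hddef
  have hdm : d ≤ n/2 := by omega
  have hcd : ((d : ℕ) : Fin n) = a - b := by
    rw [hddef, Nat.cast_sub (by omega), Fin.natCast_self, htdef, Fin.cast_val_eq_self]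
    ring
  have hab : ∀ i : ℕ, a - ((i+1 : ℕ) : Fin n) = (a - (i : Fin n)) - 1 := by
    intro i; rw [cast_succ_fin]; ring
  have hendc : a - ((d : ℕ) : Fin n) = b := by rw [hcd]; ring
  set f : ℕ → Fin n × Fin 2 := fun i => if i ≤ d then (a - (i : Fin n), x) else (b, y) with hfdef
  have hadj : ∀ i, i < d + 1 → (cycleGraph n □ cycleGraph 2).Adj (f i) (f (i+1)) := by
    intro i hi
    rcases Nat.lt_or_ge i d with hlt | hge
    · have h1 : f i = (a - (i : Fin n), x) := by simp [hfdef, (show i ≤ d by omega)]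
      have h2 : f (i+1) = (a - ((i+1:ℕ) : Fin n), x) := by simp [hfdef, (show i+1 ≤ d by omega)]
      rw [h1, h2, hab i]
      have := (boxProd_adj_left (G := cycleGraph n) (H := cycleGraph 2) (b := x)).mpr
        (adj_fwd hn ((a - (i : Fin n)) - 1))
      rw [sub_add_cancel] at this
      exact ((cycleGraph n □ cycleGraph 2).adj_symm this)
    · have hieq : i = d := by omega
      rw [hieq]
      have h1 : f d = (b, x) := by simp [hfdef, hendc]
      have h2 : f (d+1) = (b, y) := by simp [hfdef, (show ¬ (d+1 ≤ d) by omega)]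
      rw [h1, h2]
      exact adj_vert b hxy
  have h0 : f 0 = (a, x) := by simp [hfdef]
  have hend : f (d+1) = (b, y) := by simp [hfdef, (show ¬ (d+1 ≤ d) by omega)]
  have hbase : ∀ i : ℕ, i < d → a - ((i+1 : ℕ) : Fin n) = b + ((d - 1 - i : ℕ) : Fin n) := by
    intro i hi
    have h1 : ((d - 1 - i : ℕ) : Fin n) = ((d : ℕ) : Fin n) - ((i+1 : ℕ) : Fin n) := by
      rw [show d - 1 - i = d - (i+1) by omega, Nat.cast_sub (by omega)]
    rw [h1, hcd]; ring
  refine ⟨(mkWalk _ f (d+1) hadj).copy (by rw [h0]) (by rw [hend]), ?_, ?_⟩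
  · simp
  · rw [Walk.edges_copy, mkWalk_edges, List.map_map]
    apply nodup_of_colors
    intro i j hij hj
    dsimp only [Function.comp]
    have hcol : ∀ l, l < d → colr n s(f l, f (l+1)) = ecV n (b + ((d - 1 - l : ℕ) : Fin n)) := by
      intro l hl
      have h1 : f l = (a - (l : Fin n), x) := by simp [hfdef, (show l ≤ d by omega)]
      have h2 : f (l+1) = (a - ((l+1:ℕ) : Fin n), x) := by simp [hfdef, (show l+1 ≤ d by omega)]
      rw [h1, h2]
      rw [show (a - ((l:ℕ) : Fin n)) = (a - ((l+1:ℕ) : Fin n)) + 1 by rw [hab l]; ring]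
      rw [colr_horiz' hn _ x, hbase l hl]
    have hcold : colr n s(f d, f (d+1)) = rungV n b := by
      have h1 : f d = (b, x) := by simp [hfdef, hendc]
      rw [h1, hend]
      exact colr_vert b hxy
    rcases Nat.lt_or_ge j d with hjd | hjd
    · rw [hcol i (by omega), hcol j hjd]
      intro hEq
      have hne : d - 1 - j < d - 1 - i := by omega
      exact ec_window' hn b hne (by omega) (congrArg Fin.val hEq).symm
    · have hjeq : j = d := by omega
      subst hjeq
      rw [hcol i (by omega), hcold]
      intro hEq
      exact rung_avoid hn b (s := d - 1 - i) (by omega) (congrArg Fin.val hEq)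

lemma exists_good_walk {n : ℕ} [NeZero n] (hn : 3 ≤ n) (a b : Fin n) (x y : Fin 2) :
    ∃ p : (cycleGraph n □ cycleGraph 2).Walk (a, x) (b, y),
      p.length = dC n a b + (if x = y then 0 else 1) ∧ ((p.edges.map (colr n)).Nodup) := by
  rcases eq_or_ne x y with rfl | hxy
  · rcases le_or_gt (b - a).val (n/2) with ht | ht
    · obtain ⟨p, h1, h2⟩ := gw_fwd hn a b x ht
      exact ⟨p, by rw [h1, dC_eq_of_le hn ht, if_pos rfl]; omega, h2⟩
    · obtain ⟨p, h1, h2⟩ := gw_bwd hn a b x ht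
      exact ⟨p, by rw [h1, dC_eq_of_gt hn ht, if_pos rfl]; omega, h2⟩
  · rcases le_or_gt (b - a).val (n/2) with ht | ht
    · obtain ⟨p, h1, h2⟩ := gw_fwd' hn a b hxy ht
      exact ⟨p, by rw [h1, dC_eq_of_le hn ht, if_neg hxy], h2⟩
    · obtain ⟨p, h1, h2⟩ := gw_bwd' hn a b hxy ht
      exact ⟨p, by rw [h1, dC_eq_of_gt hn ht, if_neg hxy], h2⟩

lemma prism_dist {n : ℕ} [NeZero n] (hn : 3 ≤ n) (a b : Fin n) (x y : Fin 2) :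
    (cycleGraph n □ cycleGraph 2).dist (a, x) (b, y) = dC n a b + (if x = y then 0 else 1) := by
  obtain ⟨p, h1, _⟩ := exists_good_walk hn a b x y
  have hreach : (cycleGraph n □ cycleGraph 2).Reachable (a, x) (b, y) := ⟨p⟩
  obtain ⟨q, hq⟩ := hreach.exists_walk_length_eq_dist
  refine le_antisymm (h1 ▸ SimpleGraph.dist_le p) ?_
  rw [← hq]
  exact prism_dist_ge hn a b x y (p := q)
end PrismSrc

theorem stmt_3 (n : ℕ) (hn : 3 ≤ n) :
    (cycleGraph n □ cycleGraph 2).src = (n + 1 + 1) / 2 := by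
  haveI : NeZero n := ⟨by omega⟩
  have hk : (n + 1 + 1) / 2 = n/2 + 1 := by omega
  rw [hk, SimpleGraph.src]
  have hmem : n/2 + 1 ∈ {k : ℕ | ∃ c : Sym2 (Fin n × Fin 2) → Fin k,
      (cycleGraph n □ cycleGraph 2).IsStrongRainbowColoring c} := by
    refine ⟨PrismSrc.colr n, ?_⟩
    rintro ⟨a, x⟩ ⟨b, y⟩ huv
    obtain ⟨p, h1, h2⟩ := PrismSrc.exists_good_walk hn a b x y
    have hdist := PrismSrc.prism_dist hn a b x y
    have hlen : p.length = (cycleGraph n □ cycleGraph 2).dist (a, x) (b, y) := by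
      rw [h1, hdist]
    exact ⟨p, p.isPath_of_length_eq_dist hlen, hlen, h2⟩
  apply le_antisymm
  · exact Nat.sInf_le hmem
  · apply le_csInf ⟨_, hmem⟩
    rintro k ⟨c, hc⟩
    have hne : ((0, 0) : Fin n × Fin 2) ≠ ((⟨n/2, by omega⟩ : Fin n), (1 : Fin 2)) := by
      have h01 : (0 : Fin 2) ≠ 1 := by decide
      intro h
      exact h01 (congrArg Prod.snd h)
    obtain ⟨p, hp, hlen, hnd⟩ := hc _ _ hne
    have hsub : (((⟨n/2, by omega⟩ : Fin n)) - 0).val = n/2 := by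
      rw [sub_zero]
    have hdist : (cycleGraph n □ cycleGraph 2).dist (0, 0) ((⟨n/2, by omega⟩ : Fin n), (1 : Fin 2))
        = n/2 + 1 := by
      rw [PrismSrc.prism_dist hn 0 ⟨n/2, by omega⟩ 0 1,
        PrismSrc.dC_eq_of_le hn (by rw [hsub]), hsub, if_neg (by decide)]
    have hcard := List.Nodup.length_le_card hnd
    rw [List.length_map, SimpleGraph.Walk.length_edges, hlen, hdist, Fintype.card_fin] at hcard
    exact hcard
end

section
/- For any connected graph Γ and any integer n ≥ 3, src(Γ □ C_n) ≤ ⌈(n−2)/2⌉ + src(Γ □ C_2). -/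
open SimpleGraph Finset

/-!
Split `C_n` into the arcs `[0, m]` and `[m + 1, n - 1]`, where `m = ⌈(n - 2) / 2⌉`, and fold
`G □ C_n` onto `G □ C_2` by sending each arc to one layer. A strong rainbow coloring `c` of
`G □ C_2` pulls back along the fold to every edge except the cycle edges inside an arc; these get
one of `m` fresh colors, namely their lower endpoint modulo `m + 1`. A shortest arc of `C_n` has
at most `⌊n / 2⌋` edges, while the two crossing edges, and any two cycle edges with the same fresh
color, are `⌊n / 2⌋` apart; so a shortest arc crosses at most once and meets distinct fresh colors.
A geodesic from `(u, i)` to `(v, j)` therefore runs along the cycle at `u` up to the crossing,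
follows the image of a `c`-rainbow geodesic of `G □ C_2`, and finishes along the cycle at `v`.

Conversely, geodesics between the layers `0` and `1` of `G □ C_n` stay in these two layers, so a
strong rainbow coloring of `G □ C_n` restricts to one of `G □ C_2` with the same colors. This
covers the case where `src (G □ C_2)` is the junk value `0` of an empty infimum.
-/

open Fin.NatCast Fin.CommRing

lemma Nat.mod_eq_ite_of_lt_two_mul {x k : ℕ} (h : x < 2 * k) :
    x % k = if x < k then x else x - k := by
  split_ifs with hk
  · exact Nat.mod_eq_of_lt hk
  · rw [Nat.mod_eq_sub_mod (not_lt.1 hk), Nat.mod_eq_of_lt (by omega)]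

namespace Fin

variable {n : ℕ}

lemma val_sub_eq_ite (a b : Fin n) :
    (a - b).val = if b ≤ a then a.val - b.val else n + a.val - b.val := by
  split_ifs with h
  · exact sub_val_of_le h
  · exact coe_sub_iff_lt.2 (not_le.1 h)

lemma val_add_one_eq_ite [NeZero n] (a : Fin n) :
    (a + 1).val = if a.val + 1 = n then 0 else a.val + 1 := by
  rw [val_add, val_one', Nat.add_mod_mod]
  split_ifs with h
  · rw [h, Nat.mod_self]
  · exact Nat.mod_eq_of_lt (by omega)

lemma val_add_natCast_eq_ite [NeZero n] (i : Fin n) {s : ℕ} (hs : s < n) :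
    (i + (s : Fin n)).val = if i.val + s < n then i.val + s else i.val + s - n := by
  rw [val_add, val_natCast, Nat.mod_eq_of_lt hs, Nat.mod_eq_ite_of_lt_two_mul (by omega)]

end Fin

lemma List.nodup_map_inl_append_map_inr_append_map_inl {α β : Type*} {l₁ l₃ : List α}
    {l₂ : List β} (h₁₃ : (l₁ ++ l₃).Nodup) (h₂ : l₂.Nodup) :
    (l₁.map Sum.inl ++ (l₂.map Sum.inr ++ l₃.map Sum.inl)).Nodup := by
  refine (List.Perm.nodup_iff ?_).2 (List.nodup_append.2
    ⟨h₁₃.map Sum.inl_injective, h₂.map Sum.inr_injective, by simp⟩)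
  rw [List.map_append, List.append_assoc]
  exact List.perm_append_comm.append_left _

namespace SimpleGraph

variable {V W α : Type*} {G : SimpleGraph V} {H : SimpleGraph W}

lemma dist_boxProd (hG : G.Connected) (hH : H.Connected) (x y : V × W) :
    (G □ H).dist x y = G.dist x.1 y.1 + H.dist x.2 y.2 := by
  rw [dist, dist, dist, edist_boxProd, ENat.toNat_add (edist_ne_top_iff_reachable.2 (hG _ _))
    (edist_ne_top_iff_reachable.2 (hH _ _))]

lemma Walk.exists_edges_eq_map {V' : Type*} {G' : SimpleGraph V'} (f : V → V') (s : Set V)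
    (hf : ∀ a ∈ s, ∀ b ∈ s, G.Adj a b → G'.Adj (f a) (f b)) :
    ∀ {x y : V} (p : G.Walk x y), (∀ z ∈ p.support, z ∈ s) →
      ∃ q : G'.Walk (f x) (f y), q.edges = p.edges.map (Sym2.map f)
  | _, _, .nil, _ => ⟨.nil, rfl⟩
  | _, _, .cons h p, hp => by
    obtain ⟨q, hq⟩ := p.exists_edges_eq_map f s hf fun z hz => hp z (List.mem_cons_of_mem _ hz)
    exact ⟨.cons (hf _ (hp _ (by simp)) _ (hp _ (by simp)) h) q, by simp [hq]⟩

lemma boxProd_adj_prodMap {W' : Type*} {H' : SimpleGraph W'} (g : W → W') {t : Set W}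
    (hg : ∀ b ∈ t, ∀ b' ∈ t, H.Adj b b' → H'.Adj (g b) (g b')) {z z' : V × W}
    (hz : z.2 ∈ t) (hz' : z'.2 ∈ t) (h : (G □ H).Adj z z') :
    (G □ H').Adj (Prod.map id g z) (Prod.map id g z') := by
  rcases h with ⟨h, h₂⟩ | ⟨h, h₁⟩
  · exact .inl ⟨h, by simp [h₂]⟩
  · exact .inr ⟨hg _ hz _ hz' h, h₁⟩

namespace Walk

variable {x y z : V × W}

lemma dist_snd_add_dist_snd (hG : G.Connected) (hH : H.Connected) (p : (G □ H).Walk x y)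
    (hp : p.length = (G □ H).dist x y) (hz : z ∈ p.support) :
    H.dist x.2 z.2 + H.dist z.2 y.2 = H.dist x.2 y.2 := by
  classical
  have h₁ := dist_le (p.takeUntil z hz)
  have h₂ := dist_le (p.dropUntil z hz)
  have hlen := congrArg length (p.take_spec hz)
  rw [length_append] at hlen
  rw [dist_boxProd hG hH] at h₁ h₂ hp
  have := hG.dist_triangle (u := x.1) (v := z.1) (w := y.1)
  have := hH.dist_triangle (u := x.2) (v := z.2) (w := y.2)
  omega

lemma snd_eq_or_snd_eq (hG : G.Connected) (hH : H.Connected) (p : (G □ H).Walk x y)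
    (hp : p.length = (G □ H).dist x y) (hxy : H.dist x.2 y.2 ≤ 1) (hz : z ∈ p.support) :
    z.2 = x.2 ∨ z.2 = y.2 := by
  have h := p.dist_snd_add_dist_snd hG hH hp hz
  by_cases hxz : H.dist x.2 z.2 = 0
  · exact .inl ((hH.dist_eq_zero_iff.1 hxz).symm)
  · exact .inr (hH.dist_eq_zero_iff.1 (by omega))

end Walk

lemma isStrongRainbowColoring_iff {c : Sym2 V → α} :
    G.IsStrongRainbowColoring c ↔
      ∀ u v, ∃ p : G.Walk u v, p.length = G.dist u v ∧ (p.edges.map c).Nodup := by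
  refine ⟨fun hc u v => ?_, fun h u v _ => ?_⟩
  · by_cases huv : u = v
    · subst huv
      exact ⟨.nil, by simp, by simp⟩
    · obtain ⟨p, -, hp⟩ := hc u v huv
      exact ⟨p, hp⟩
  · obtain ⟨p, hl, hc⟩ := h u v
    exact ⟨p, p.isPath_of_length_eq_dist hl, hl, hc⟩

lemma isStrongRainbowColoring_of_total {c : Sym2 V → α} (r : V → V → Prop)
    (hr : ∀ u v, r u v ∨ r v u)
    (h : ∀ u v, r u v → ∃ p : G.Walk u v, p.length = G.dist u v ∧ (p.edges.map c).Nodup) :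
    G.IsStrongRainbowColoring c := by
  refine isStrongRainbowColoring_iff.2 fun u v => (hr u v).elim (h u v) fun hvu => ?_
  obtain ⟨p, hl, hc⟩ := h v u hvu
  refine ⟨p.reverse, by rw [Walk.length_reverse, hl, dist_comm], ?_⟩
  rw [Walk.edges_reverse, List.map_reverse]
  exact List.nodup_reverse.2 hc

lemma src_le_card [Fintype α] {c : Sym2 V → α} (hc : G.IsStrongRainbowColoring c) :
    G.src ≤ Fintype.card α := by
  refine Nat.sInf_le ⟨Fintype.equivFin α ∘ c, fun u v huv => ?_⟩
  obtain ⟨p, hp, hl, hn⟩ := hc u v huv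
  exact ⟨p, hp, hl, by rw [← List.map_map]; exact hn.map (Equiv.injective _)⟩

section Cycle

variable {n : ℕ} [NeZero n]

lemma cycleGraph_connected' : (cycleGraph n).Connected := by
  obtain ⟨k, rfl⟩ := Nat.exists_eq_succ_of_ne_zero (NeZero.ne n)
  exact cycleGraph_connected

lemma cycleGraph_adj_add_one (hn : 2 ≤ n) (i : Fin n) : (cycleGraph n).Adj i (i + 1) :=
  cycleGraph_adj'.2 (.inr (by rw [add_sub_cancel_left, Fin.val_one', Nat.mod_eq_of_lt hn]))

lemma cycleGraph_exists_walk_add (hn : 2 ≤ n) (i : Fin n) (t : ℕ) :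
    ∃ p : (cycleGraph n).Walk i (i + t),
      p.edges = (List.range t).map fun s : ℕ => s(i + s, i + s + 1) := by
  induction t with
  | zero => exact ⟨Walk.nil.copy rfl (by simp), by simp⟩
  | succ t ih =>
    obtain ⟨p, hp⟩ := ih
    refine ⟨(p.concat (cycleGraph_adj_add_one hn _)).copy rfl (by push_cast; ring), ?_⟩
    simp [Walk.edges_concat, hp, List.range_succ]

lemma cycleGraph_min_val_sub_le_length {i j : Fin n} (p : (cycleGraph n).Walk i j) :
    min (j - i).val (i - j).val ≤ p.length := by
  induction p with
  | nil => simp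
  | @cons i z j h q ih =>
    rw [Walk.length_cons]
    rw [cycleGraph_adj'] at h
    simp only [Fin.val_sub_eq_ite, Fin.le_def] at h ih ⊢
    split_ifs at h ih ⊢ <;> omega

lemma cycleGraph_dist (hn : 2 ≤ n) (i j : Fin n) :
    (cycleGraph n).dist i j = min (j - i).val (i - j).val := by
  refine le_antisymm (le_min ?_ ?_) ?_
  · obtain ⟨p, hp⟩ := cycleGraph_exists_walk_add hn i (j - i).val
    simpa [← Walk.length_edges, hp] using dist_le (p.copy rfl (by simp) : (cycleGraph n).Walk i j)
  · obtain ⟨p, hp⟩ := cycleGraph_exists_walk_add hn j (i - j).val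
    simpa [dist_comm, ← Walk.length_edges, hp] using
      dist_le (p.copy rfl (by simp) : (cycleGraph n).Walk j i)
  · obtain ⟨p, hp⟩ := cycleGraph_connected'.exists_walk_length_eq_dist i j
    exact hp ▸ cycleGraph_min_val_sub_le_length p

end Cycle

lemma cycleGraph_two_dist (b b' : Fin 2) :
    (cycleGraph 2).dist b b' = if b = b' then 0 else 1 := by
  rw [cycleGraph_two_eq_top]
  split_ifs with h
  · simp [h]
  · exact dist_top_of_ne h

section Restrict

variable {n : ℕ}

lemma cycleGraph_adj_castLE (hn : 2 ≤ n) {b b' : Fin 2} (h : b ≠ b') :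
    (cycleGraph n).Adj (Fin.castLE hn b) (Fin.castLE hn b') := by
  rw [cycleGraph_adj']
  fin_cases b <;> fin_cases b' <;> simp_all [Fin.val_sub_eq_ite, Fin.le_def]

lemma cycleGraph_dist_castLE (hn : 2 ≤ n) (b b' : Fin 2) :
    (cycleGraph n).dist (Fin.castLE hn b) (Fin.castLE hn b') = (cycleGraph 2).dist b b' := by
  obtain rfl | h := eq_or_ne b b'
  · simp
  · rw [dist_eq_one_iff_adj.2 (cycleGraph_adj_castLE hn h), cycleGraph_two_eq_top,
      dist_top_of_ne h]

theorem IsStrongRainbowColoring.comap_castLE (hG : G.Connected) (hn : 2 ≤ n)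
    {c : Sym2 (V × Fin n) → α} (hc : (G □ cycleGraph n).IsStrongRainbowColoring c) :
    (G □ cycleGraph 2).IsStrongRainbowColoring
      (c ∘ Sym2.map (Prod.map id (Fin.castLE hn))) := by
  have : NeZero n := ⟨by omega⟩
  set ι : Fin 2 → Fin n := Fin.castLE hn
  let r : Fin n → Fin 2 := fun w => if h : w.val < 2 then ⟨w.val, h⟩ else 0
  let t : Set (Fin n) := {w | w.val < 2}
  have hιr : ∀ w ∈ t, ι (r w) = w := fun w hw => by ext; simp_all [ι, r, t]
  have hr : ∀ w ∈ t, ∀ w' ∈ t, (cycleGraph n).Adj w w' →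
      (cycleGraph 2).Adj (r w) (r w') := fun w hw w' hw' h => by
      rw [cycleGraph_two_eq_top, top_adj]
      exact fun hrr => h.ne (by rw [← hιr w hw, ← hιr w' hw', hrr])
  let s : Set (V × Fin n) := {z | z.2 ∈ t}
  rw [isStrongRainbowColoring_iff]
  rintro ⟨u, b⟩ ⟨v, b'⟩
  obtain ⟨p, hpl, hpc⟩ := isStrongRainbowColoring_iff.1 hc (u, ι b) (v, ι b')
  have hps : ∀ z ∈ p.support, z ∈ s := fun z hz => by
    rcases p.snd_eq_or_snd_eq hG cycleGraph_connected' hpl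
      (by rw [cycleGraph_dist_castLE, cycleGraph_two_dist]; split_ifs <;> simp) hz with h | h <;>
      simp [s, t, h, ι, Fin.is_le]
  obtain ⟨q, hq⟩ := p.exists_edges_eq_map _ s
    (fun z hz z' hz' => boxProd_adj_prodMap r hr hz hz') hps
  have hrι : ∀ b, r (ι b) = b := fun b => by
    simp only [r, dif_pos (show (ι b).val < 2 from b.isLt)]
    rfl
  refine ⟨q.copy (by simp [hrι]) (by simp [hrι]), ?_, ?_⟩
  · rw [Walk.length_copy, ← Walk.length_edges, hq, List.length_map, Walk.length_edges, hpl,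
      dist_boxProd hG cycleGraph_connected', dist_boxProd hG cycleGraph_connected',
      cycleGraph_dist_castLE]
  · rw [Walk.edges_copy, hq, List.map_map]
    convert hpc using 1
    refine List.map_congr_left fun e he => ?_
    simp only [Function.comp_apply, Sym2.map_map]
    congr 1
    rw [Sym2.map_congr (g := id) fun z hz => show Prod.map id ι (Prod.map id r z) = z from
      Prod.ext rfl (hιr z.2 (hps z (Walk.mem_support_of_mem_edges he hz))), Sym2.map_id, id]

end Restrict

section Extend

variable {n m k : ℕ}

def cycleLayer (m : ℕ) (w : Fin n) : Fin 2 := if w.val ≤ m then 0 else 1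

def freshColor (m : ℕ) [NeZero m] (w : Fin n) : Fin m := ((w.val % (m + 1) : ℕ) : Fin m)

def extendColoring (m : ℕ) [NeZero m] (c : Sym2 (V × Fin 2) → Fin k) :
    Sym2 (V × Fin n) → Fin m ⊕ Fin k :=
  Sym2.lift ⟨fun p q => if p.2 ≠ q.2 ∧ cycleLayer m p.2 = cycleLayer m q.2
      then .inl (freshColor m (min p.2 q.2))
      else .inr (c s((p.1, cycleLayer m p.2), (q.1, cycleLayer m q.2))),
    fun p q => by simp only [ne_comm, eq_comm, min_comm, Sym2.eq_swap]⟩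

lemma extendColoring_map_of_cycleLayer_comp [NeZero m] (c : Sym2 (V × Fin 2) → Fin k)
    (g : Fin 2 → Fin n) {e : Sym2 (V × Fin 2)} (he : ∀ z ∈ e, cycleLayer m (g z.2) = z.2) :
    extendColoring m c (e.map (Prod.map id g)) = .inr (c e) := by
  induction e using Sym2.ind with
  | h z z' =>
    have hz := he z (Sym2.mem_mk_left z z')
    have hz' := he z' (Sym2.mem_mk_right z z')
    refine (if_neg fun h => h.1 (congrArg g ?_)).trans (by simp only [Prod.map, hz, hz']; rfl)
    rw [← hz, ← hz']
    exact h.2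

lemma eq_of_mod_eq_of_lt_window [NeZero n] (hmn : (n - 1) / 2 = m) (i : Fin n) {d s₁ s₂ : ℕ}
    (hd : 2 * d ≤ n) (h₁ : s₁ < d) (h₂ : s₂ < d)
    (h : (i + (s₁ : Fin n)).val % (m + 1) = (i + (s₂ : Fin n)).val % (m + 1)) :
    s₁ = s₂ := by
  have := i.isLt
  rw [Fin.val_add_natCast_eq_ite i (by omega : s₁ < n),
    Fin.val_add_natCast_eq_ite i (by omega : s₂ < n)] at h
  split_ifs at h <;>
    rw [Nat.mod_eq_ite_of_lt_two_mul (by omega), Nat.mod_eq_ite_of_lt_two_mul (by omega)] at h <;>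
    split_ifs at h <;> omega

variable [NeZero n] [NeZero m]

lemma cycleLayer_add_one_eq_iff (hmn : (n - 1) / 2 = m) (w : Fin n) :
    cycleLayer m (w + 1) = cycleLayer m w ↔ w.val ≠ m ∧ w.val ≠ n - 1 := by
  have := w.isLt
  have := NeZero.ne m
  simp only [cycleLayer, Fin.val_add_one_eq_ite]
  split_ifs <;> simp <;> omega

lemma eq_of_cycleLayer_ne_of_lt_window (hmn : (n - 1) / 2 = m) (i : Fin n) {d s₁ s₂ : ℕ}
    (hd : 2 * d ≤ n) (h₁ : s₁ < d) (h₂ : s₂ < d)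
    (hc₁ : cycleLayer m (i + (s₁ : Fin n) + 1) ≠ cycleLayer m (i + (s₁ : Fin n)))
    (hc₂ : cycleLayer m (i + (s₂ : Fin n) + 1) ≠ cycleLayer m (i + (s₂ : Fin n))) :
    s₁ = s₂ := by
  have := i.isLt
  rw [Ne, cycleLayer_add_one_eq_iff hmn, Fin.val_add_natCast_eq_ite i (by omega)] at hc₁ hc₂
  split_ifs at hc₁ hc₂ <;> omega

lemma mod_lt_of_cycleLayer_add_one_eq (hmn : (n - 1) / 2 = m) {w : Fin n}
    (hw : cycleLayer m (w + 1) = cycleLayer m w) : w.val % (m + 1) < m := by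
  have := w.isLt
  rw [cycleLayer_add_one_eq_iff hmn] at hw
  rw [Nat.mod_eq_ite_of_lt_two_mul (by omega)]
  split_ifs <;> omega

lemma eq_of_freshColor_eq_of_lt_window (hmn : (n - 1) / 2 = m) (i : Fin n) {d s₁ s₂ : ℕ}
    (hd : 2 * d ≤ n) (h₁ : s₁ < d) (h₂ : s₂ < d)
    (hc₁ : cycleLayer m (i + (s₁ : Fin n) + 1) = cycleLayer m (i + (s₁ : Fin n)))
    (hc₂ : cycleLayer m (i + (s₂ : Fin n) + 1) = cycleLayer m (i + (s₂ : Fin n)))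
    (h : freshColor m (i + (s₁ : Fin n)) = freshColor m (i + (s₂ : Fin n))) : s₁ = s₂ := by
  refine eq_of_mod_eq_of_lt_window hmn i hd h₁ h₂ ?_
  have := congrArg Fin.val h
  rwa [freshColor, freshColor, Fin.val_natCast, Fin.val_natCast,
    Nat.mod_eq_of_lt (mod_lt_of_cycleLayer_add_one_eq hmn hc₁),
    Nat.mod_eq_of_lt (mod_lt_of_cycleLayer_add_one_eq hmn hc₂)] at this

lemma extendColoring_mk_add_one (hmn : (n - 1) / 2 = m) (c : Sym2 (V × Fin 2) → Fin k) (x : V)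
    {w : Fin n} (hw : cycleLayer m (w + 1) = cycleLayer m w) :
    extendColoring m c s((x, w), (x, w + 1)) = .inl (freshColor m w) := by
  have := w.isLt
  have h1 := Fin.val_add_one_eq_ite w
  rw [cycleLayer_add_one_eq_iff hmn] at hw
  rw [if_neg (by omega)] at h1
  have hne : w ≠ w + 1 := fun h => by rw [Fin.ext_iff, h1] at h; omega
  have hmin : min w (w + 1) = w := min_eq_left (Fin.le_def.2 (by omega))
  rw [← cycleLayer_add_one_eq_iff hmn] at hw
  simp only [extendColoring, Sym2.lift_mk]
  rw [if_pos ⟨hne, hw.symm⟩, hmin]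

lemma exists_walk_extendColoring_eq_map_inl (hmn : (n - 1) / 2 = m)
    (c : Sym2 (V × Fin 2) → Fin k) (x : V) (i : Fin n) {t t' : ℕ} (htt' : t ≤ t')
    (harc : ∀ s, t ≤ s → s < t' →
      cycleLayer m (i + (s : Fin n) + 1) = cycleLayer m (i + (s : Fin n))) :
    ∃ A : (G □ cycleGraph n).Walk (x, i + t) (x, i + t'), A.length = t' - t ∧
      A.edges.map (extendColoring m c) =
        (List.range' t (t' - t)).map fun s => .inl (freshColor m (i + (s : Fin n))) := by
  have := NeZero.ne m
  obtain ⟨p, hp⟩ := cycleGraph_exists_walk_add (by omega : 2 ≤ n) (i + t) (t' - t)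
  refine ⟨(p.map (G.boxProdRight (cycleGraph n) x).toHom).copy (by simp)
    (by simp [Nat.cast_sub htt']), ?_, ?_⟩
  · rw [Walk.length_copy, Walk.length_map, ← Walk.length_edges, hp, List.length_map,
      List.length_range]
  · rw [Walk.edges_copy, Walk.edges_map, hp, List.range'_eq_map_range,
      List.map_map, List.map_map, List.map_map]
    refine List.map_congr_left fun s hs => ?_
    have hpos : i + (t : Fin n) + s = i + ((t + s : ℕ) : Fin n) := by push_cast; ring
    simp only [Function.comp_apply, Sym2.map_mk, Embedding.coe_toHom, boxProdRight_apply, hpos]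
    exact extendColoring_mk_add_one hmn c x (harc _ (by omega) (by simp at hs; omega))

variable {c : Sym2 (V × Fin 2) → Fin k}

lemma exists_walk_extendColoring_eq_map_inr (hG : G.Connected)
    (hc : (G □ cycleGraph 2).IsStrongRainbowColoring c) (hn : 2 ≤ n) (u v : V)
    {w₁ w₂ : Fin n}
    (hw : w₂ = w₁ ∨ (w₂ = w₁ + 1 ∧ cycleLayer m w₂ ≠ cycleLayer m w₁)) :
    ∃ Q : (G □ cycleGraph n).Walk (u, w₁) (v, w₂),
      Q.length = G.dist u v + (cycleGraph 2).dist (cycleLayer m w₁) (cycleLayer m w₂) ∧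
      ∃ l : List (Fin k), l.Nodup ∧ Q.edges.map (extendColoring m c) = l.map .inr := by
  set b₁ := cycleLayer m w₁
  set b₂ := cycleLayer m w₂
  let g : Fin 2 → Fin n := fun b => if b = b₁ then w₁ else w₂
  have hg₁ : g b₁ = w₁ := if_pos rfl
  have hg₂ : g b₂ = w₂ := by
    simp only [g]
    split_ifs with h
    · rcases hw with hw | hw
      · exact hw.symm
      · exact absurd h hw.2
    · rfl
  let t : Set (Fin 2) := {b₁, b₂}
  have hgt : ∀ b ∈ t, cycleLayer m (g b) = b := by
    rintro b (rfl | rfl)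
    exacts [hg₁ ▸ rfl, hg₂ ▸ rfl]
  have hg : ∀ b ∈ t, ∀ b' ∈ t, (cycleGraph 2).Adj b b' →
      (cycleGraph n).Adj (g b) (g b') := by
    intro b hb b' hb' h
    have hb₁₂ : b₁ ≠ b₂ := fun hb₁₂ => h.ne (by
      rcases hb with rfl | rfl <;> rcases hb' with rfl | rfl <;> simp_all)
    obtain ⟨rfl, -⟩ := hw.resolve_left fun hw => hb₁₂ (by simp only [b₁, b₂, hw])
    rcases hb with rfl | rfl <;> rcases hb' with rfl | rfl <;> simp only [hg₁, hg₂]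
    · exact absurd rfl h.ne
    · exact cycleGraph_adj_add_one hn w₁
    · exact (cycleGraph_adj_add_one hn w₁).symm
    · exact absurd rfl h.ne
  let s : Set (V × Fin 2) := {z | z.2 ∈ t}
  obtain ⟨P, hPl, hPc⟩ := isStrongRainbowColoring_iff.1 hc (u, b₁) (v, b₂)
  have hPs : ∀ z ∈ P.support, z ∈ s := fun z hz =>
    P.snd_eq_or_snd_eq hG cycleGraph_connected' hPl
      (by rw [cycleGraph_two_dist]; split_ifs <;> simp) hz
  obtain ⟨Q, hQ⟩ := P.exists_edges_eq_map _ s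
    (fun z hz z' hz' => boxProd_adj_prodMap g hg hz hz') hPs
  refine ⟨Q.copy (by simp [hg₁]) (by simp [hg₂]), ?_, P.edges.map c, hPc, ?_⟩
  · rw [Walk.length_copy, ← Walk.length_edges, hQ, List.length_map, Walk.length_edges, hPl,
      dist_boxProd hG cycleGraph_connected']
  · rw [Walk.edges_copy, hQ, List.map_map, List.map_map]
    refine List.map_congr_left fun e he => ?_
    exact extendColoring_map_of_cycleLayer_comp c g fun z hz =>
      hgt z.2 (hPs z (Walk.mem_support_of_mem_edges he hz))

lemma exists_walk_extendColoring_nodup (hmn : (n - 1) / 2 = m) (hG : G.Connected)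
    (hc : (G □ cycleGraph 2).IsStrongRainbowColoring c) (u v : V) (i : Fin n) {d t₁ t₂ : ℕ}
    (hd : 2 * d ≤ n) (ht₂ : t₂ ≤ d)
    (hswitch : t₂ = t₁ ∨ (t₂ = t₁ + 1 ∧
      cycleLayer m (i + (t₁ : Fin n) + 1) ≠ cycleLayer m (i + (t₁ : Fin n))))
    (harc : ∀ s < d, (s < t₁ ∨ t₂ ≤ s) →
      cycleLayer m (i + (s : Fin n) + 1) = cycleLayer m (i + (s : Fin n))) :
    ∃ W : (G □ cycleGraph n).Walk (u, i) (v, i + d),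
      W.length = G.dist u v + d ∧ (W.edges.map (extendColoring m c)).Nodup := by
  -- `W` runs along the cycle at `u` over the positions `i + s`, `s < t₁`, then changes
  -- layer (when `t₂ = t₁ + 1`) along the image of a rainbow geodesic of `G □ C_2`, and
  -- finishes along the cycle at `v` over the positions `i + s`, `t₂ ≤ s < d`.
  have := NeZero.ne m
  obtain ⟨A, hAl, hA⟩ := exists_walk_extendColoring_eq_map_inl (G := G) hmn c u i
    (Nat.zero_le t₁) fun s _ hs => harc s (by omega) (.inl hs)
  obtain ⟨B, hBl, hB⟩ := exists_walk_extendColoring_eq_map_inl (G := G) hmn c v i ht₂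
    fun s hs hs' => harc s hs' (.inr hs)
  have hw : i + (t₂ : Fin n) = i + t₁ ∨ (i + (t₂ : Fin n) = i + t₁ + 1 ∧
      cycleLayer m (i + (t₂ : Fin n)) ≠ cycleLayer m (i + (t₁ : Fin n))) := by
    rcases hswitch with rfl | ⟨rfl, h⟩
    · exact .inl rfl
    · exact .inr ⟨by push_cast; ring, by push_cast; rwa [← add_assoc]⟩
  obtain ⟨Q, hQl, l, hl, hQ⟩ := exists_walk_extendColoring_eq_map_inr hG hc (by omega) u v hw
  refine ⟨(A.copy (by simp) rfl).append (Q.append B), ?_, ?_⟩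
  · rw [Walk.length_append, Walk.length_append, Walk.length_copy, hAl, hQl, hBl,
      cycleGraph_two_dist]
    rcases hswitch with rfl | ⟨rfl, h⟩
    · rw [if_pos rfl]
      omega
    · rw [show i + ((t₁ + 1 : ℕ) : Fin n) = i + t₁ + 1 by push_cast; ring, if_neg h.symm]
      omega
  · rw [Walk.edges_append, Walk.edges_append, Walk.edges_copy, List.map_append, List.map_append,
      hA, hB, hQ, Nat.sub_zero]
    have hidx : (List.range' 0 t₁ ++ List.range' t₂ (d - t₂)).Nodup :=
      List.nodup_append.2
        ⟨List.nodup_range', List.nodup_range', by simp [List.mem_range'_1]; omega⟩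
    have hF : ((List.range' 0 t₁ ++ List.range' t₂ (d - t₂)).map
        fun s : ℕ => freshColor m (i + (s : Fin n))).Nodup := by
      refine hidx.map_on fun s hs s' hs' h => ?_
      simp only [List.mem_append, List.mem_range'_1] at hs hs'
      exact eq_of_freshColor_eq_of_lt_window hmn i hd (by omega) (by omega)
        (harc s (by omega) (by omega)) (harc s' (by omega) (by omega)) h
    rw [List.map_append] at hF
    simpa only [List.map_map, Function.comp_def] using
      List.nodup_map_inl_append_map_inr_append_map_inl hF hl

theorem isStrongRainbowColoring_extendColoring (hmn : (n - 1) / 2 = m) (hG : G.Connected)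
    (hc : (G □ cycleGraph 2).IsStrongRainbowColoring c) :
    (G □ cycleGraph n).IsStrongRainbowColoring (extendColoring m c) := by
  have := NeZero.ne m
  refine isStrongRainbowColoring_of_total (fun x y => (y.2 - x.2).val ≤ (x.2 - y.2).val)
    (fun _ _ => le_total _ _) ?_
  rintro ⟨u, i⟩ ⟨v, j⟩ (hij : (j - i).val ≤ (i - j).val)
  set d := (j - i).val
  have hd : 2 * d ≤ n := by
    have := Fin.val_sub_eq_ite j i
    have := Fin.val_sub_eq_ite i j
    simp only [Fin.le_def] at *
    split_ifs at * <;> omega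
  obtain ⟨t₁, t₂, ht₂, hswitch, harc⟩ : ∃ t₁ t₂, t₂ ≤ d ∧
      (t₂ = t₁ ∨ (t₂ = t₁ + 1 ∧
        cycleLayer m (i + (t₁ : Fin n) + 1) ≠ cycleLayer m (i + (t₁ : Fin n)))) ∧
      ∀ s < d, (s < t₁ ∨ t₂ ≤ s) →
        cycleLayer m (i + (s : Fin n) + 1) = cycleLayer m (i + (s : Fin n)) := by
    by_cases hcross :
        ∃ s < d, cycleLayer m (i + (s : Fin n) + 1) ≠ cycleLayer m (i + (s : Fin n))
    · obtain ⟨s, hs, hcs⟩ := hcross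
      refine ⟨s, s + 1, hs, .inr ⟨rfl, hcs⟩, fun s' hs' hss' => by_contra fun hcs' => ?_⟩
      have := eq_of_cycleLayer_ne_of_lt_window hmn i hd hs' hs hcs' hcs
      omega
    · push Not at hcross
      exact ⟨d, d, le_rfl, .inl rfl, fun s hs _ => hcross s hs⟩
  obtain ⟨W, hWl, hW⟩ := exists_walk_extendColoring_nodup hmn hG hc u v i hd ht₂ hswitch harc
  refine ⟨W.copy rfl (by simp [d]), ?_, by rwa [Walk.edges_copy]⟩
  rw [Walk.length_copy, hWl, dist_boxProd hG cycleGraph_connected',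
    cycleGraph_dist (by omega), min_eq_left hij]

end Extend

end SimpleGraph

theorem stmt_5 {V : Type*} (G : SimpleGraph V) (hG : G.Connected) (n : ℕ) (hn : 3 ≤ n) :
    (G □ cycleGraph n).src ≤ (n - 2 + 1) / 2 + (G □ cycleGraph 2).src := by
  have : NeZero n := ⟨by omega⟩
  have : NeZero ((n - 2 + 1) / 2) := ⟨by omega⟩
  rcases Set.eq_empty_or_nonempty {k | ∃ c : Sym2 (V × Fin 2) → Fin k,
      (G □ cycleGraph 2).IsStrongRainbowColoring c} with h | h
  · have hempty : {k | ∃ c : Sym2 (V × Fin n) → Fin k,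
        (G □ cycleGraph n).IsStrongRainbowColoring c} = ∅ :=
      Set.eq_empty_iff_forall_notMem.2 fun k ⟨c, hc⟩ =>
        Set.eq_empty_iff_forall_notMem.1 h k ⟨_, hc.comap_castLE hG (by omega)⟩
    rw [src, hempty, Nat.sInf_empty]
    exact Nat.zero_le _
  · obtain ⟨c, hc⟩ := Nat.sInf_mem h
    calc (G □ cycleGraph n).src
        ≤ Fintype.card (Fin ((n - 2 + 1) / 2) ⊕ Fin (G □ cycleGraph 2).src) :=
          src_le_card (isStrongRainbowColoring_extendColoring (by omega) hG hc)
      _ = (n - 2 + 1) / 2 + (G □ cycleGraph 2).src := by simp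
end

section
/- For r ≥ 1 factors all equal to C_2, src(C_2 □ ⋯ □ C_2) = r, i.e., the strong rainbow connection number of the r-dimensional hypercube Q_r equals r. -/
open SimpleGraph Finset

/-! Colour each edge of the hypercube by the coordinate it flips. Flipping the coordinates in
which `u` and `v` differ one at a time gives a walk that uses each colour at most once and whose
length is the Hamming distance of `u` and `v`, which is also their graph distance since every edge
changes one coordinate. Conversely, the antipodal vertices `0` and `1` are at distance `r`, so a
strong rainbow colouring needs `r` distinct colours on a geodesic between them. -/

theorem SimpleGraph.IsStrongRainbowColoring.dist_le_card {V α : Type*} [Fintype α]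
    {G : SimpleGraph V} {c : Sym2 V → α} (hc : G.IsStrongRainbowColoring c) (u v : V) :
    G.dist u v ≤ Fintype.card α := by
  obtain rfl | huv := eq_or_ne u v
  · simp
  obtain ⟨p, -, hlen, hnodup⟩ := hc u v huv
  simpa [← hlen] using hnodup.length_le_card

theorem SimpleGraph.dist_le_src {V : Type*} {G : SimpleGraph V}
    (h : ∃ k, ∃ c : Sym2 V → Fin k, G.IsStrongRainbowColoring c) (u v : V) :
    G.dist u v ≤ G.src :=
  le_csInf h fun _ ⟨_, hc⟩ => by simpa using hc.dist_le_card u v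

section Hamming

variable {ι : Type*} [Fintype ι] [DecidableEq ι] {β : ι → Type*} [∀ i, DecidableEq (β i)]

theorem hammingDist_update_le_one (x : ∀ i, β i) (i : ι) (a : β i) :
    hammingDist x (Function.update x i a) ≤ 1 := by
  refine (card_le_card fun j hj => ?_).trans (card_singleton i).le
  by_contra hji
  simp_all [Function.update_of_ne (Finset.mem_singleton.not.mp hji)]

theorem hammingDist_update_lt {x y : ∀ i, β i} {i : ι} (h : x i ≠ y i) :
    hammingDist (Function.update x i (y i)) y < hammingDist x y := by
  refine card_lt_card ⟨fun j => ?_, fun hsub => ?_⟩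
  · by_cases hji : j = i
    · subst hji; simp
    · simp [Function.update_of_ne hji]
  · simpa using hsub (mem_filter.mpr ⟨mem_univ i, h⟩)

theorem length_le_hammingDist_of_nodup {l : List ι} {x y : ∀ i, β i} (hl : l.Nodup)
    (h : ∀ i ∈ l, x i ≠ y i) : l.length ≤ hammingDist x y := by
  rw [← List.toFinset_card_of_nodup hl]
  exact card_le_card fun i hi => mem_filter.mpr ⟨mem_univ i, h i (List.mem_toFinset.mp hi)⟩

end Hamming

abbrev hypercube (r : ℕ) : SimpleGraph (Fin r → Fin 2) := toroidalMesh fun _ => 2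

namespace hypercube

open Function

variable {r : ℕ}

theorem adj_iff {u v : Fin r → Fin 2} :
    (hypercube r).Adj u v ↔ ∃ i, u i ≠ v i ∧ ∀ j ≠ i, u j = v j := by
  simp only [toroidalMesh, fromRel_adj, cycleGraph_two_eq_top, top_adj]
  constructor
  · rintro ⟨-, ⟨i, hi, hj⟩ | ⟨i, hi, hj⟩⟩
    · exact ⟨i, hi, hj⟩
    · exact ⟨i, hi.symm, fun j hji => (hj j hji).symm⟩
  · rintro ⟨i, hi, hj⟩
    exact ⟨fun h => hi (congrFun h i), Or.inl ⟨i, hi, hj⟩⟩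

theorem adj_update {u : Fin r → Fin 2} {i : Fin r} {a : Fin 2} (ha : a ≠ u i) :
    (hypercube r).Adj u (update u i a) :=
  adj_iff.mpr ⟨i, by simpa using ha.symm, fun j hj => (update_of_ne hj a u).symm⟩

theorem hammingDist_le_length {u v : Fin r → Fin 2} (p : (hypercube r).Walk u v) :
    hammingDist u v ≤ p.length := by
  induction p with
  | nil => simp
  | @cons u w v huw p ih =>
    obtain ⟨i, -, hi⟩ := adj_iff.mp huw
    have hw : w = update u i (w i) := eq_update_iff.mpr ⟨rfl, fun j hj => (hi j hj).symm⟩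
    calc hammingDist u v ≤ hammingDist u w + hammingDist w v := hammingDist_triangle u w v
      _ ≤ 1 + p.length := by
        gcongr
        rw [hw]
        exact hammingDist_update_le_one u i (w i)
      _ = (Walk.cons huw p).length := by rw [Walk.length_cons, add_comm]

def IsDirectionColoring (c : Sym2 (Fin r → Fin 2) → Fin r) : Prop :=
  ∀ u i a, a ≠ u i → c s(u, update u i a) = i

theorem exists_isDirectionColoring (hr : 0 < r) :
    ∃ c : Sym2 (Fin r → Fin 2) → Fin r, IsDirectionColoring c := by
  let differ (u v : Fin r → Fin 2) : Finset (Fin r) := {i | u i ≠ v i}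
  have differ_comm (u v) : differ u v = differ v u := by simp only [differ, ne_comm]
  refine ⟨Sym2.lift ⟨fun u v => if h : (differ u v).Nonempty then (differ u v).min' h
    else ⟨0, hr⟩, fun u v => by simp only [differ_comm u v]⟩, fun u i a ha => ?_⟩
  have hsingle : differ u (update u i a) = {i} := by
    ext j
    by_cases hji : j = i
    · subst hji; simpa [differ] using ha.symm
    · simp [differ, hji]
  simp [hsingle]

theorem exists_walk_nodup_map {c : Sym2 (Fin r → Fin 2) → Fin r} (hc : IsDirectionColoring c)
    (u v : Fin r → Fin 2) :
    ∃ p : (hypercube r).Walk u v, (p.edges.map c).Nodup ∧ ∀ i ∈ p.edges.map c, u i ≠ v i := by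
  obtain rfl | huv := eq_or_ne u v
  · exact ⟨.nil, by simp, by simp⟩
  obtain ⟨i, hi⟩ := ne_iff.mp huv
  obtain ⟨p, hnodup, hdiffer⟩ := exists_walk_nodup_map hc (update u i (v i)) v
  have hci : c s(u, update u i (v i)) = i := hc u i (v i) hi.symm
  refine ⟨.cons (adj_update hi.symm) p, ?_, ?_⟩
  · rw [Walk.edges_cons, List.map_cons, hci, List.nodup_cons]
    exact ⟨fun hmem => hdiffer i hmem (by simp), hnodup⟩
  · rw [Walk.edges_cons, List.map_cons, hci]
    rintro j (_ | ⟨_, hj⟩)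
    · exact hi
    · have hji : j ≠ i := by rintro rfl; simpa using hdiffer _ hj
      simpa [update_of_ne hji] using hdiffer j hj
termination_by hammingDist u v
decreasing_by exact hammingDist_update_lt hi

theorem dist_eq_hammingDist (u v : Fin r → Fin 2) : (hypercube r).dist u v = hammingDist u v := by
  obtain rfl | hr := Nat.eq_zero_or_pos r
  · simp [Subsingleton.elim u v]
  obtain ⟨c, hc⟩ := exists_isDirectionColoring hr
  obtain ⟨p, hnodup, hdiffer⟩ := exists_walk_nodup_map hc u v
  obtain ⟨q, hq⟩ := Reachable.exists_walk_length_eq_dist ⟨p⟩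
  refine le_antisymm ((dist_le p).trans ?_) (hq ▸ hammingDist_le_length q)
  simpa using length_le_hammingDist_of_nodup hnodup hdiffer

theorem IsDirectionColoring.isStrongRainbowColoring {c : Sym2 (Fin r → Fin 2) → Fin r}
    (hc : IsDirectionColoring c) : (hypercube r).IsStrongRainbowColoring c := by
  intro u v _
  obtain ⟨p, hnodup, hdiffer⟩ := exists_walk_nodup_map hc u v
  have hlen : p.length = (hypercube r).dist u v := by
    rw [dist_eq_hammingDist]
    exact le_antisymm (by simpa using length_le_hammingDist_of_nodup hnodup hdiffer)
      (hammingDist_le_length p)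
  exact ⟨p, p.isPath_of_length_eq_dist hlen, hlen, hnodup⟩

end hypercube

theorem stmt_14 (r : ℕ) (hr : 1 ≤ r) :
    (toroidalMesh (fun _ : Fin r => 2)).src = r := by
  obtain ⟨c, hc⟩ := hypercube.exists_isDirectionColoring hr
  have hstrong := hc.isStrongRainbowColoring
  refine le_antisymm (Nat.sInf_le ⟨c, hstrong⟩) ?_
  calc r = hammingDist (0 : Fin r → Fin 2) 1 := by simp [hammingDist]
    _ = (hypercube r).dist 0 1 := (hypercube.dist_eq_hammingDist 0 1).symm
    _ ≤ (hypercube r).src := dist_le_src ⟨r, c, hstrong⟩ 0 1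
end

section
/- For any three odd integers n_1, n_2, n_3 ≥ 3, src(C_{n_1} □ C_{n_2} □ C_{n_3}) ≤ ⌈(n_1 + n_2 + n_3)/2⌉ = (n_1 + n_2 + n_3 + 1)/2, which is strictly less than ⌈n_1/2⌉ + ⌈n_2/2⌉ + ⌈n_3/2⌉ = (n_1 + n_2 + n_3 + 3)/2. -/
open SimpleGraph Finset

namespace SRCAux


/-- step in a cycle: `true` = up, `false` = down -/
def stepF {n : ℕ} [NeZero n] (d : Bool) (t : Fin n) : Fin n :=
  match d with
  | true => t + 1
  | false => t - 1

/-- mod-free formula for position after `i` steps from `X < n`, `i ≤ n`. -/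
def pos (n : ℕ) (d : Bool) (X i : ℕ) : ℕ :=
  match d with
  | true => if X + i < n then X + i else X + i - n
  | false => if i ≤ X then X - i else X + n - i

lemma val_one_eq {n : ℕ} [NeZero n] (hn : 2 ≤ n) : ((1 : Fin n) : ℕ) = 1 := by
  rw [Fin.val_one', Nat.mod_eq_of_lt (by omega)]

lemma val_add_one {n : ℕ} [NeZero n] (hn : 2 ≤ n) (t : Fin n) :
    (t + 1).val = if t.val + 1 = n then 0 else t.val + 1 := by
  have h : (t + 1).val = (t.val + 1) % n := by
    rw [Fin.add_def]
    simp [Fin.val_one', Nat.mod_eq_of_lt (show 1 < n by omega)]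
  rw [h]
  have ht := t.isLt
  rcases Nat.lt_or_ge (t.val + 1) n with h2 | h2
  · rw [Nat.mod_eq_of_lt h2, if_neg (by omega)]
  · have h3 : t.val + 1 = n := by omega
    simp [h3]

lemma val_sub_one {n : ℕ} [NeZero n] (hn : 2 ≤ n) (t : Fin n) :
    (t - 1).val = if t.val = 0 then n - 1 else t.val - 1 := by
  have h : (t - 1).val = (n - 1 + t.val) % n := by
    rw [Fin.sub_def]
    simp [Fin.val_one', Nat.mod_eq_of_lt (show 1 < n by omega)]
  rw [h]
  have ht := t.isLt
  rcases eq_or_ne t.val 0 with h2 | h2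
  · rw [h2, if_pos rfl, Nat.add_zero, Nat.mod_eq_of_lt (by omega)]
  · rw [if_neg h2]
    have h3 : n - 1 + t.val = n + (t.val - 1) := by omega
    rw [h3, Nat.add_mod_left, Nat.mod_eq_of_lt (by omega)]

lemma pos_lt {n : ℕ} (hn : 0 < n) (d : Bool) (X i : ℕ) (hX : X < n) (hi : i ≤ n) :
    pos n d X i < n := by
  cases d <;> simp only [pos] <;> split <;> omega

lemma stepF_iterate {n : ℕ} [NeZero n] (hn : 2 ≤ n) (d : Bool) (t : Fin n) :
    ∀ i, i ≤ n → ((stepF d)^[i] t).val = pos n d t.val i := by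
  intro i
  induction i with
  | zero => intro _; have := t.isLt; cases d <;> simp only [pos] <;> simp <;> omega
  | succ k ih =>
    intro hk
    rw [Function.iterate_succ_apply']
    have hv := ih (by omega)
    have hlt : ((stepF d)^[k] t).val < n := Fin.isLt _
    have ht := t.isLt
    cases d with
    | false =>
      show ((stepF false)^[k] t - 1).val = _
      rw [val_sub_one hn]
      simp only [pos] at hv ⊢
      split at hv <;> (repeat' split) <;> omega
    | true =>
      show ((stepF true)^[k] t + 1).val = _
      rw [val_add_one hn]
      simp only [pos] at hv ⊢
      split at hv <;> (repeat' split) <;> omega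

lemma stepF_adj {n : ℕ} [NeZero n] (hn : 3 ≤ n) (d : Bool) (t : Fin n) :
    (cycleGraph n).Adj t (stepF d t) := by
  rw [cycleGraph_adj']
  cases d with
  | true =>
    right
    show (t + 1 - t).val = 1
    have h : t + 1 - t = 1 := by abel
    rw [h, val_one_eq (by omega)]
  | false =>
    left
    show (t - (t - 1)).val = 1
    have h : t - (t - 1) = 1 := by abel
    rw [h, val_one_eq (by omega)]

/-- directed cyclic gap from X to X', both < n -/
def dN (n X X' : ℕ) : ℕ := if X ≤ X' then X' - X else X' + n - X

/-- cycle distance -/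
def cd (n X X' : ℕ) : ℕ := min (dN n X X') (dN n X' X)

lemma fin_sub_val {n : ℕ} [NeZero n] (a b : Fin n) :
    (a - b).val = if b.val ≤ a.val then a.val - b.val else a.val + n - b.val := by
  rw [Fin.sub_def]
  have ha := a.isLt; have hb := b.isLt
  show (n - b.val + a.val) % n = _
  rcases Nat.lt_or_ge a.val b.val with h | h
  · rw [Nat.mod_eq_of_lt (by omega), if_neg (by omega)]; omega
  · have h3 : n - b.val + a.val = n + (a.val - b.val) := by omega
    rw [h3, Nat.add_mod_left, Nat.mod_eq_of_lt (by omega), if_pos (by omega)]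

/-- adjacency in the cycle in terms of values -/
lemma adj_val {n : ℕ} [NeZero n] (hn : 3 ≤ n) {t t' : Fin n}
    (h : (cycleGraph n).Adj t t') :
    (t.val + 1 = t'.val ∨ t'.val + 1 = t.val ∨ (t.val = n - 1 ∧ t'.val = 0)
      ∨ (t'.val = n - 1 ∧ t.val = 0)) := by
  rw [cycleGraph_adj'] at h
  have ht := t.isLt; have ht' := t'.isLt
  rcases h with h | h <;> rw [fin_sub_val] at h <;> split at h <;> omega

/-- one step changes the cycle distance to a fixed target by at most 1 -/
lemma cd_step {n m : ℕ} [NeZero n] (hn : n = 2*m+1) (hm : 1 ≤ m) {t t' : Fin n} (X : ℕ)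
    (hX : X < n) (h : (cycleGraph n).Adj t t') :
    cd n t.val X ≤ cd n t'.val X + 1 := by
  have hv := adj_val (by omega) h
  have ht := t.isLt; have ht' := t'.isLt
  unfold cd dN
  rcases hv with h | h | h | h <;> (repeat' split) <;> omega

/-- direction choice toward target -/
def dirOf (n : ℕ) (X X' : ℕ) : Bool := decide (2 * dN n X X' ≤ n)

lemma reach {n m : ℕ} [NeZero n] (hn : n = 2*m+1) (hm : 1 ≤ m) (x x' : Fin n) :
    cd n x.val x'.val ≤ m ∧
    (stepF (dirOf n x.val x'.val))^[cd n x.val x'.val] x = x' := by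
  have hx := x.isLt; have hx' := x'.isLt
  have hd : cd n x.val x'.val ≤ m := by unfold cd dN; (repeat' split) <;> omega
  refine ⟨hd, ?_⟩
  apply Fin.ext
  rw [stepF_iterate (by omega) _ _ _ (by omega)]
  by_cases hD : 2 * dN n x.val x'.val ≤ n
  · have hdir : dirOf n x.val x'.val = true := by simp [dirOf, hD]
    rw [hdir]
    simp only [pos]
    unfold dN at hD
    unfold cd dN
    split at hD <;> (repeat' split) <;> omega
  · have hdir : dirOf n x.val x'.val = false := by simp [dirOf, hD]
    rw [hdir]
    simp only [pos]
    unfold dN at hD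
    unfold cd dN
    split at hD <;> (repeat' split) <;> omega



variable {V : Type*} {G : SimpleGraph V}

/-- straight walk along a step function -/
def straight (f : V → V) (h : ∀ p, G.Adj p (f p)) : (k : ℕ) → (p : V) → G.Walk p (f^[k] p)
  | 0, _ => Walk.nil
  | k+1, p =>
    Walk.cons (h p) ((straight f h k (f p)).copy rfl (Function.iterate_succ_apply f k p).symm)

lemma straight_length (f : V → V) (h : ∀ p, G.Adj p (f p)) (k : ℕ) (p : V) :
    (straight f h k p).length = k := by
  induction k generalizing p with
  | zero => rfl
  | succ k ih => simp [straight, ih]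

lemma straight_edges (f : V → V) (h : ∀ p, G.Adj p (f p)) (k : ℕ) (p : V) :
    (straight f h k p).edges = (List.range k).map (fun i => s(f^[i] p, f^[i+1] p)) := by
  induction k generalizing p with
  | zero => rfl
  | succ k ih =>
    rw [List.range_succ_eq_map]
    simp only [straight, Walk.edges_cons, Walk.edges_copy, ih]
    simp [List.map_map, Function.comp, Function.iterate_succ_apply]




/-- index of the `i`-th edge of a straight run -/
def eix (n : ℕ) (d : Bool) (X i : ℕ) : ℕ :=
  match d with
  | true => pos n true X i
  | false => pos n false X (i+1)

/-- vertical palette: `{0} ∪ [a+1, a+b]`, color 0 only at edge 0 -/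
def gy (b a E : ℕ) : ℕ := if E = 0 then 0 else if E ≤ b then E + a else E - b + a

/-- color of the special horizontal edges (column x = 0) at height `Y` -/
def gam (b a Y : ℕ) : ℕ := if Y = b + 1 then 0 else gy b a Y

/-- horizontal colors -/
def hx (a b E Y : ℕ) : ℕ := if E = 0 then gam b a Y else if E ≤ a then E else E - a

/-- z-palette `[a+b+1, a+b+c+1]` -/
def gz (a b c E : ℕ) : ℕ := if E ≤ c then E + (a+b+1) else E - c + (a+b)

lemma eix_lt {n : ℕ} (d : Bool) {X i : ℕ} (hX : X < n) (hi : i + 1 ≤ n) :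
    eix n d X i < n := by
  cases d <;> simp only [eix, pos] <;> split <;> omega

lemma eix_inj {n : ℕ} (d : Bool) {X i j : ℕ} (hX : X < n) (hi : i + 1 ≤ n) (hj : j + 1 ≤ n)
    (h : eix n d X i = eix n d X j) : i = j := by
  cases d <;> simp only [eix, pos] at h <;> split_ifs at h <;> omega

lemma gy_inj {b a n₂ : ℕ} (hb : 1 ≤ b) (h2 : n₂ = 2*b+1) (δ : Bool) {Y d₂ : ℕ}
    (hY : Y < n₂) (hd₂ : d₂ ≤ b) {i j : ℕ} (hi : i < d₂) (hj : j < d₂)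
    (h : gy b a (eix n₂ δ Y i) = gy b a (eix n₂ δ Y j)) : i = j := by
  subst h2
  cases δ <;> simp only [eix, pos, gy] at h <;> split_ifs at h <;> omega

lemma gy_range {b a n₂ : ℕ} (h2 : n₂ = 2*b+1) {E : ℕ} (hE : E < n₂) :
    gy b a E = 0 ∨ (a + 1 ≤ gy b a E ∧ gy b a E ≤ a + b) := by
  subst h2; simp only [gy]; split_ifs <;> omega

lemma gy_eq_zero {b a n₂ : ℕ} (h2 : n₂ = 2*b+1) {E : ℕ} (hE : E < n₂) :
    gy b a E = 0 ↔ E = 0 := by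
  subst h2; simp only [gy]; split_ifs <;> omega

lemma gam_range {b a n₂ : ℕ} (h2 : n₂ = 2*b+1) {Y : ℕ} (hY : Y < n₂) :
    gam b a Y = 0 ∨ (a + 1 ≤ gam b a Y ∧ gam b a Y ≤ a + b) := by
  subst h2; simp only [gam, gy]; split_ifs <;> omega

lemma hx_range {a b n₁ : ℕ} (h1 : n₁ = 2*a+1) {E Y : ℕ} (hE : E < n₁) (hEne : E ≠ 0) :
    1 ≤ hx a b E Y ∧ hx a b E Y ≤ a := by
  subst h1; simp only [hx]; split_ifs <;> omega

lemma gz_range {a b c n₃ : ℕ} (h3 : n₃ = 2*c+1) {E : ℕ} (hE : E < n₃) :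
    a + b + 1 ≤ gz a b c E ∧ gz a b c E ≤ a + b + c + 1 := by
  subst h3; simp only [gz]; split_ifs <;> omega

lemma gz_inj {a b c n₃ : ℕ} (hc : 1 ≤ c) (h3 : n₃ = 2*c+1) (τ : Bool) {Z d₃ : ℕ}
    (hZ : Z < n₃) (hd₃ : d₃ ≤ c) {i j : ℕ} (hi : i < d₃) (hj : j < d₃)
    (h : gz a b c (eix n₃ τ Z i) = gz a b c (eix n₃ τ Z j)) : i = j := by
  subst h3
  cases τ <;> simp only [eix, pos, gz] at h <;> split_ifs at h <;> omega

lemma pos_lt' {n : ℕ} (hn : 0 < n) (d : Bool) (X i : ℕ) (hX : X < n) (hi : i ≤ n) :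
    pos n d X i < n := by
  cases d <;> simp only [pos] <;> split <;> omega

lemma gy_gam_eq {b a : ℕ} {P W : ℕ} (hP : P ≤ 2*b) (hW : W ≤ 2*b)
    (h : gy b a P = gam b a W) :
    (W = b+1 ∧ P = 0) ∨ (W ≠ b+1 ∧ (P = W ∨ (1 ≤ P ∧ P ≤ b ∧ W = P + b)
      ∨ (1 ≤ W ∧ W ≤ b ∧ P = W + b))) := by
  simp only [gam, gy] at h; split_ifs at h <;> omega

/-- Case A: crossing at the "upper" endpoint of the y-run -/
lemma caseA {b a n₂ : ℕ} (hb : 1 ≤ b) (h2 : n₂ = 2*b+1) (δ : Bool) {Y d₂ : ℕ}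
    (hY : Y < n₂) (hd₂ : d₂ ≤ b)
    (hcond : d₂ < b ∨ ∃ i, i < d₂ ∧ eix n₂ δ Y i = 0) :
    ∀ i < d₂, gy b a (eix n₂ δ Y i) ≠ gam b a (pos n₂ δ Y (cond δ d₂ 0)) := by
  subst h2
  intro i hi h
  have hEb : eix (2*b+1) δ Y i ≤ 2*b := by
    have := eix_lt δ hY (show i+1 ≤ 2*b+1 by omega) (n := 2*b+1); omega
  have hWb : pos (2*b+1) δ Y (cond δ d₂ 0) ≤ 2*b := by
    have := pos_lt' (show 0 < 2*b+1 by omega) δ Y (cond δ d₂ 0) hY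
      (by cases δ <;> simp [cond] <;> omega)
    omega
  have hch := gy_gam_eq hEb hWb h
  rcases hcond with hlt | ⟨i₀, hi₀, he₀⟩
  · cases δ <;> simp only [eix, pos, cond] at hch <;> split_ifs at hch <;> omega
  · cases δ <;> simp only [eix, pos, cond] at hch he₀ <;> split_ifs at hch he₀ <;> omega

/-- Case B: can cross at height `b+1` -/
lemma caseB {b n₂ : ℕ} (hb : 1 ≤ b) (h2 : n₂ = 2*b+1) (δ : Bool) {Y : ℕ}
    (hY : Y < n₂) (hzero : ∀ i < b, eix n₂ δ Y i ≠ 0) :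
    ∃ s ≤ b, pos n₂ δ Y s = b + 1 := by
  subst h2
  cases δ with
  | true =>
    have hY1 : 1 ≤ Y := by
      rcases Nat.eq_zero_or_pos Y with h0 | h0
      · exfalso
        exact hzero 0 hb (by subst h0; simp only [eix, pos]; split_ifs <;> omega)
      · omega
    have hYb : Y ≤ b + 1 := by
      by_contra hcon
      have := hzero (2*b+1 - Y) (by omega)
      simp only [eix, pos] at this
      split_ifs at this <;> omega
    refine ⟨b + 1 - Y, by omega, ?_⟩
    simp only [pos]; split_ifs <;> omega
  | false =>
    have hY0 : Y = 0 ∨ b + 1 ≤ Y := by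
      by_contra hcon
      push_neg at hcon
      have := hzero (Y - 1) (by omega)
      simp only [eix, pos] at this
      split_ifs at this <;> omega
    refine ⟨if Y = 0 then b else Y - b - 1, by split_ifs <;> omega, ?_⟩
    rcases hY0 with h0 | h0
    · subst h0; simp only [pos]; split_ifs <;> omega
    · rw [if_neg (by omega)]; simp only [pos]; split_ifs <;> omega

lemma hx_noclash {a b n₁ : ℕ} (ha : 1 ≤ a) (h1 : n₁ = 2*a+1) (σ : Bool) {X d₁ W : ℕ}
    (hX : X < n₁) (hd₁ : d₁ ≤ a) {i j : ℕ} (hi : i < d₁) (hj : j < d₁)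
    (hz1 : eix n₁ σ X i ≠ 0) (hz2 : eix n₁ σ X j ≠ 0)
    (h : hx a b (eix n₁ σ X i) W = hx a b (eix n₁ σ X j) W) : i = j := by
  subst h1
  rw [hx, hx, if_neg hz1, if_neg hz2] at h
  cases σ <;> simp only [eix, pos] at h hz1 hz2 <;> split_ifs at h <;> omega

/-- master nodup lemma for the color list of the constructed walk -/
lemma master_nodup {a b c n₁ n₂ n₃ : ℕ} (ha : 1 ≤ a) (hb : 1 ≤ b) (hc : 1 ≤ c)
    (h1 : n₁ = 2*a+1) (h2 : n₂ = 2*b+1) (h3 : n₃ = 2*c+1)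
    (σ δ τ : Bool) {X Y Z : ℕ} (hX : X < n₁) (hY : Y < n₂) (hZ : Z < n₃)
    {d₁ d₂ d₃ s : ℕ} (hd₁ : d₁ ≤ a) (hd₂ : d₂ ≤ b) (hd₃ : d₃ ≤ c) (hs : s ≤ d₂)
    (HY : ∀ j < d₁, eix n₁ σ X j = 0 →
      ∀ i < d₂, gy b a (eix n₂ δ Y i) ≠ gam b a (pos n₂ δ Y s)) :
    ((List.range s).map (fun i => gy b a (eix n₂ δ Y i))
      ++ ((List.range d₁).map (fun j => hx a b (eix n₁ σ X j) (pos n₂ δ Y s))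
      ++ ((List.range (d₂ - s)).map (fun i => gy b a (eix n₂ δ Y (s + i)))
      ++ (List.range d₃).map (fun k => gz a b c (eix n₃ τ Z k))))).Nodup := by
  have hyB : ∀ i < d₂, ∀ j < d₂, gy b a (eix n₂ δ Y i) = gy b a (eix n₂ δ Y j) → i = j :=
    fun i hi j hj h => gy_inj hb h2 δ hY hd₂ hi hj h
  have hyR : ∀ i < d₂, gy b a (eix n₂ δ Y i) = 0 ∨
      (a + 1 ≤ gy b a (eix n₂ δ Y i) ∧ gy b a (eix n₂ δ Y i) ≤ a + b) :=
    fun i hi => gy_range h2 (eix_lt δ hY (by omega))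
  have hzR : ∀ k < d₃, a + b + 1 ≤ gz a b c (eix n₃ τ Z k) ∧
      gz a b c (eix n₃ τ Z k) ≤ a + b + c + 1 :=
    fun k hk => gz_range h3 (eix_lt τ hZ (by omega))
  -- values of the x-part
  have hxV : ∀ j < d₁, (eix n₁ σ X j = 0 ∧
        hx a b (eix n₁ σ X j) (pos n₂ δ Y s) = gam b a (pos n₂ δ Y s)) ∨
      (eix n₁ σ X j ≠ 0 ∧ 1 ≤ hx a b (eix n₁ σ X j) (pos n₂ δ Y s) ∧
        hx a b (eix n₁ σ X j) (pos n₂ δ Y s) ≤ a) := by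
    intro j hj
    by_cases h0 : eix n₁ σ X j = 0
    · exact Or.inl ⟨h0, by simp [hx, h0]⟩
    · exact Or.inr ⟨h0, hx_range h1 (eix_lt σ hX (by omega)) h0⟩
  have hposY : pos n₂ δ Y s < n₂ := by
    cases δ <;> simp only [pos] <;> split <;> omega
  have hgamR := gam_range (a := a) h2 hposY
  -- x-part is nodup
  have hxN : ((List.range d₁).map
      (fun j => hx a b (eix n₁ σ X j) (pos n₂ δ Y s))).Nodup := by
    refine List.Nodup.map_on ?_ List.nodup_range
    intro i hi j hj hij
    rw [List.mem_range] at hi hj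
    have hij' : hx a b (eix n₁ σ X i) (pos n₂ δ Y s)
        = hx a b (eix n₁ σ X j) (pos n₂ δ Y s) := hij
    rcases hxV i hi with ⟨hz1, he1⟩ | ⟨hz1, he1⟩ <;> rcases hxV j hj with ⟨hz2, he2⟩ | ⟨hz2, he2⟩
    · exact eix_inj σ hX (by omega) (by omega) (hz1.trans hz2.symm)
    · rw [he1] at hij'; omega
    · rw [he2] at hij'; omega
    · exact hx_noclash ha h1 σ hX hd₁ hi hj hz1 hz2 hij'
  -- y-part (full) is nodup
  have hyN : ∀ i < d₂, ∀ j < d₂, i ≠ j →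
      gy b a (eix n₂ δ Y i) ≠ gy b a (eix n₂ δ Y j) :=
    fun i hi j hj hne h => hne (hyB i hi j hj h)
  -- y vs x disjointness
  have hyx : ∀ i < d₂, ∀ j < d₁,
      gy b a (eix n₂ δ Y i) ≠ hx a b (eix n₁ σ X j) (pos n₂ δ Y s) := by
    intro i hi j hj h
    rcases hxV j hj with ⟨hz, he⟩ | ⟨hz, he⟩
    · exact HY j hj hz i hi (h.trans he)
    · rcases hyR i hi with h0 | h0 <;> omega
  refine List.Nodup.append ?_ (List.Nodup.append hxN (List.Nodup.append ?_ ?_ ?_) ?_) ?_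
  · exact List.Nodup.map_on (fun i hi j hj h =>
      hyB i (by rw [List.mem_range] at hi; omega) j (by rw [List.mem_range] at hj; omega) h) List.nodup_range
  · refine List.Nodup.map_on ?_ List.nodup_range
    intro i hi j hj h
    rw [List.mem_range] at hi hj
    have := hyB (s+i) (by omega) (s+j) (by omega) h
    omega
  · exact List.Nodup.map_on (fun i hi j hj h =>
      gz_inj hc h3 τ hZ hd₃ (List.mem_range.1 hi) (List.mem_range.1 hj) h) List.nodup_range
  · -- y2 vs z disjoint
    intro x hx1 hx2
    simp only [List.mem_map, List.mem_range] at hx1 hx2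
    obtain ⟨i, hi, rfl⟩ := hx1
    obtain ⟨k, hk, he⟩ := hx2
    have := hyR (s+i) (by omega)
    have := hzR k hk
    omega
  · -- x vs (y2 ++ z) disjoint
    intro x hx1 hx2
    simp only [List.mem_append, List.mem_map, List.mem_range] at hx1 hx2
    obtain ⟨j, hj, rfl⟩ := hx1
    rcases hx2 with ⟨i, hi, he⟩ | ⟨k, hk, he⟩
    · exact hyx (s+i) (by omega) j hj he
    · rcases hxV j hj with ⟨hz, hv⟩ | ⟨hz, hv⟩
      · have := hzR k hk; omega
      · have := hzR k hk; omega
  · -- y1 vs rest disjoint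
    intro x hx1 hx2
    simp only [List.mem_append, List.mem_map, List.mem_range] at hx1 hx2
    obtain ⟨i, hi, rfl⟩ := hx1
    rcases hx2 with ⟨j, hj, he⟩ | ⟨i', hi', he⟩ | ⟨k, hk, he⟩
    · exact hyx i (by omega) j hj he.symm
    · exact hyN i (by omega) (s+i') (by omega) (by omega) he.symm
    · have := hyR i (by omega); have := hzR k hk; omega
/-- successor mod n, mod-free -/
lemma modsucc {n P : ℕ} (hP : P < n) : (P+1) % n = if P + 1 = n then 0 else P + 1 := by
  rcases eq_or_ne (P+1) n with h | h
  · simp [h]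
  · rw [Nat.mod_eq_of_lt (by omega), if_neg h]

/-- canonical index of an edge of the cycle -/
def ei (n X X' : ℕ) : ℕ := if X' = (X+1) % n then X else X'

lemma ei_step {n : ℕ} (hn : 3 ≤ n) (d : Bool) {X i : ℕ} (hX : X < n) (hi : i + 2 ≤ n) :
    ei n (pos n d X i) (pos n d X (i+1)) = eix n d X i ∧
    ei n (pos n d X (i+1)) (pos n d X i) = eix n d X i := by
  have h1 : pos n d X i < n := by cases d <;> simp only [pos] <;> split <;> omega
  have h2 : pos n d X (i+1) < n := by cases d <;> simp only [pos] <;> split <;> omega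
  unfold ei eix
  rw [modsucc h1, modsucc h2]
  cases d <;> simp only [pos] at * <;> constructor <;> split_ifs <;> omega

lemma stepF_val_ne {n : ℕ} [NeZero n] (hn : 3 ≤ n) (d : Bool) (t : Fin n) :
    stepF d t ≠ t := by
  intro h
  have h2 : ((stepF d)^[1] t).val = pos n d t.val 1 := stepF_iterate (by omega) d t 1 (by omega)
  simp only [Function.iterate_one] at h2
  rw [h] at h2
  have := t.isLt
  cases d <;> simp only [pos] at h2 <;> split_ifs at h2 <;> omega




section Graph

variable (a b c n₁ n₂ n₃ : ℕ)

abbrev VV := (Fin n₁ × Fin n₂) × Fin n₃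

noncomputable def colOf (p q : VV n₁ n₂ n₃) : ℕ :=
  if p.1.2 = q.1.2 ∧ p.2 = q.2 then hx a b (ei n₁ p.1.1.val q.1.1.val) p.1.2.val
  else if p.1.1 = q.1.1 ∧ p.2 = q.2 then gy b a (ei n₂ p.1.2.val q.1.2.val)
  else if p.1.1 = q.1.1 ∧ p.1.2 = q.1.2 then gz a b c (ei n₃ p.2.val q.2.val)
  else 0

def enc (p : VV n₁ n₂ n₃) : ℕ := (p.1.1.val * n₂ + p.1.2.val) * n₃ + p.2.val

lemma enc_inj {p q : VV n₁ n₂ n₃} (h : enc n₁ n₂ n₃ p = enc n₁ n₂ n₃ q) : p = q := by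
  obtain ⟨⟨p1, p2⟩, p3⟩ := p
  obtain ⟨⟨q1, q2⟩, q3⟩ := q
  have h1 := p1.isLt; have h2 := p2.isLt; have h3 := p3.isLt
  have h4 := q1.isLt; have h5 := q2.isLt; have h6 := q3.isLt
  unfold enc at h
  simp only [Prod.mk.injEq]
  have e3 : p3.val = q3.val := by
    have h7 := congrArg (fun t => t % n₃) h
    simp only [Nat.add_comm _ (p3 : ℕ), Nat.add_comm _ (q3 : ℕ),
      Nat.add_mul_mod_self_right, Nat.mod_eq_of_lt h3, Nat.mod_eq_of_lt h6] at h7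
    exact h7
  have hA : p1.val * n₂ + p2.val = q1.val * n₂ + q2.val := by
    rw [e3] at h
    exact Nat.eq_of_mul_eq_mul_right (by omega) (Nat.add_right_cancel h)
  have e2 : p2.val = q2.val := by
    have h7 := congrArg (fun t => t % n₂) hA
    simp only [Nat.add_comm _ (p2 : ℕ), Nat.add_comm _ (q2 : ℕ),
      Nat.add_mul_mod_self_right, Nat.mod_eq_of_lt h2, Nat.mod_eq_of_lt h5] at h7
    exact h7
  have e1 : p1.val = q1.val := by
    rw [e2] at hA
    exact Nat.eq_of_mul_eq_mul_right (by omega) (Nat.add_right_cancel hA)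
  exact ⟨⟨Fin.ext e1, Fin.ext e2⟩, Fin.ext e3⟩

noncomputable def cN : Sym2 (VV n₁ n₂ n₃) → ℕ :=
  Sym2.lift ⟨fun p q => if enc n₁ n₂ n₃ p ≤ enc n₁ n₂ n₃ q
      then colOf a b c n₁ n₂ n₃ p q else colOf a b c n₁ n₂ n₃ q p, by
    intro p q
    simp only []
    rcases le_or_gt (enc n₁ n₂ n₃ p) (enc n₁ n₂ n₃ q) with h | h
    · rcases eq_or_lt_of_le h with h2 | h2
      · have h3 := enc_inj n₁ n₂ n₃ h2
        subst h3; simp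
      · rw [if_pos h, if_neg (by omega)]
    · rw [if_neg (by omega), if_pos (by omega)]⟩

lemma cN_eval {p q : VV n₁ n₂ n₃} (h : colOf a b c n₁ n₂ n₃ p q = colOf a b c n₁ n₂ n₃ q p) :
    cN a b c n₁ n₂ n₃ s(p, q) = colOf a b c n₁ n₂ n₃ p q := by
  unfold cN
  rw [Sym2.lift_mk]
  show (if enc n₁ n₂ n₃ p ≤ enc n₁ n₂ n₃ q then colOf a b c n₁ n₂ n₃ p q
    else colOf a b c n₁ n₂ n₃ q p) = colOf a b c n₁ n₂ n₃ p q
  split_ifs with h2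
  · rfl
  · exact h.symm

end Graph

section Graph2
variable (a b c : ℕ) {n₁ n₂ n₃ : ℕ} [NeZero n₁] [NeZero n₂] [NeZero n₃]

/-- the triple torus -/
abbrev GT (n₁ n₂ n₃ : ℕ) : SimpleGraph (VV n₁ n₂ n₃) :=
  SimpleGraph.boxProd (SimpleGraph.boxProd (cycleGraph n₁) (cycleGraph n₂)) (cycleGraph n₃)

def mvX (σ : Bool) (p : VV n₁ n₂ n₃) : VV n₁ n₂ n₃ := ((stepF σ p.1.1, p.1.2), p.2)
def mvY (δ : Bool) (p : VV n₁ n₂ n₃) : VV n₁ n₂ n₃ := ((p.1.1, stepF δ p.1.2), p.2)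
def mvZ (τ : Bool) (p : VV n₁ n₂ n₃) : VV n₁ n₂ n₃ := ((p.1.1, p.1.2), stepF τ p.2)

lemma mvX_adj (hn : 3 ≤ n₁) (σ : Bool) (p : VV n₁ n₂ n₃) :
    (GT n₁ n₂ n₃).Adj p (mvX σ p) :=
  Or.inl ⟨Or.inl ⟨stepF_adj hn σ _, rfl⟩, rfl⟩

lemma mvY_adj (hn : 3 ≤ n₂) (δ : Bool) (p : VV n₁ n₂ n₃) :
    (GT n₁ n₂ n₃).Adj p (mvY δ p) :=
  Or.inl ⟨Or.inr ⟨stepF_adj hn δ _, rfl⟩, rfl⟩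

lemma mvZ_adj (hn : 3 ≤ n₃) (τ : Bool) (p : VV n₁ n₂ n₃) :
    (GT n₁ n₂ n₃).Adj p (mvZ τ p) :=
  Or.inr ⟨stepF_adj hn τ _, rfl⟩

lemma mvX_iterate (σ : Bool) (p : VV n₁ n₂ n₃) (k : ℕ) :
    (mvX σ)^[k] p = (((stepF σ)^[k] p.1.1, p.1.2), p.2) := by
  induction k with
  | zero => rfl
  | succ k ih => rw [Function.iterate_succ_apply', Function.iterate_succ_apply', ih]; rfl

lemma mvY_iterate (δ : Bool) (p : VV n₁ n₂ n₃) (k : ℕ) :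
    (mvY δ)^[k] p = ((p.1.1, (stepF δ)^[k] p.1.2), p.2) := by
  induction k with
  | zero => rfl
  | succ k ih => rw [Function.iterate_succ_apply', Function.iterate_succ_apply', ih]; rfl

lemma mvZ_iterate (τ : Bool) (p : VV n₁ n₂ n₃) (k : ℕ) :
    (mvZ τ)^[k] p = ((p.1.1, p.1.2), (stepF τ)^[k] p.2) := by
  induction k with
  | zero => rfl
  | succ k ih => rw [Function.iterate_succ_apply', Function.iterate_succ_apply', ih]; rfl

/-- color of the i-th edge of an x-run -/
lemma color_x_edge (h1 : 3 ≤ n₁) (σ : Bool) (p : VV n₁ n₂ n₃) {i : ℕ} (hi : i + 2 ≤ n₁) :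
    cN a b c n₁ n₂ n₃ s((mvX σ)^[i] p, mvX σ ((mvX σ)^[i] p))
      = hx a b (eix n₁ σ p.1.1.val i) p.1.2.val := by
  have hit : ∀ j, j ≤ n₁ → ((stepF σ)^[j] p.1.1).val = pos n₁ σ p.1.1.val j :=
    stepF_iterate (by omega) σ p.1.1
  have hstep := ei_step (n := n₁) h1 σ p.1.1.isLt hi
  have hco : ∀ q r : VV n₁ n₂ n₃, q.1.2 = r.1.2 → q.2 = r.2 →
      colOf a b c n₁ n₂ n₃ q r = hx a b (ei n₁ q.1.1.val r.1.1.val) q.1.2.val := by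
    intro q r hy hz
    unfold colOf
    rw [if_pos ⟨hy, hz⟩]
  rw [mvX_iterate]
  have hmv : mvX σ (((stepF σ)^[i] p.1.1, p.1.2), p.2)
      = (((stepF σ)^[i+1] p.1.1, p.1.2), p.2) := by
    simp [mvX, Function.iterate_succ_apply']
  rw [hmv]
  rw [cN_eval]
  · rw [hco ((((stepF σ)^[i] p.1.1, p.1.2), p.2)) ((((stepF σ)^[i+1] p.1.1, p.1.2), p.2)) rfl rfl]
    simp only []
    rw [hit i (by omega), hit (i+1) (by omega), hstep.1]
  · rw [hco ((((stepF σ)^[i] p.1.1, p.1.2), p.2)) ((((stepF σ)^[i+1] p.1.1, p.1.2), p.2)) rfl rfl,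
      hco ((((stepF σ)^[i+1] p.1.1, p.1.2), p.2)) ((((stepF σ)^[i] p.1.1, p.1.2), p.2)) rfl rfl]
    simp only []
    rw [hit i (by omega), hit (i+1) (by omega), hstep.1, hstep.2]

/-- color of the i-th edge of a y-run -/
lemma color_y_edge (h2 : 3 ≤ n₂) (δ : Bool) (p : VV n₁ n₂ n₃) {i : ℕ} (hi : i + 2 ≤ n₂) :
    cN a b c n₁ n₂ n₃ s((mvY δ)^[i] p, mvY δ ((mvY δ)^[i] p))
      = gy b a (eix n₂ δ p.1.2.val i) := by
  have hit : ∀ j, j ≤ n₂ → ((stepF δ)^[j] p.1.2).val = pos n₂ δ p.1.2.val j :=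
    stepF_iterate (by omega) δ p.1.2
  have hstep := ei_step (n := n₂) h2 δ p.1.2.isLt hi
  have hne : stepF δ ((stepF δ)^[i] p.1.2) ≠ (stepF δ)^[i] p.1.2 :=
    stepF_val_ne h2 δ _
  have hne1 : (stepF δ)^[i] p.1.2 ≠ (stepF δ)^[i+1] p.1.2 := by
    rw [Function.iterate_succ_apply']
    exact Ne.symm hne
  have hne2 : (stepF δ)^[i+1] p.1.2 ≠ (stepF δ)^[i] p.1.2 := hne1.symm
  have hco : ∀ q r : VV n₁ n₂ n₃, q.1.2 ≠ r.1.2 → q.1.1 = r.1.1 → q.2 = r.2 →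
      colOf a b c n₁ n₂ n₃ q r = gy b a (ei n₂ q.1.2.val r.1.2.val) := by
    intro q r hy hxx hz
    unfold colOf
    rw [if_neg (by intro hh; exact hy hh.1), if_pos ⟨hxx, hz⟩]
  rw [mvY_iterate]
  have hmv : mvY δ (((p.1.1, (stepF δ)^[i] p.1.2), p.2) : VV n₁ n₂ n₃)
      = ((p.1.1, (stepF δ)^[i+1] p.1.2), p.2) := by
    simp [mvY, Function.iterate_succ_apply']
  rw [hmv]
  rw [cN_eval]
  · rw [hco (((p.1.1, (stepF δ)^[i] p.1.2), p.2)) (((p.1.1, (stepF δ)^[i+1] p.1.2), p.2)) hne1 rfl rfl]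
    simp only []
    rw [hit i (by omega), hit (i+1) (by omega), hstep.1]
  · rw [hco (((p.1.1, (stepF δ)^[i] p.1.2), p.2)) (((p.1.1, (stepF δ)^[i+1] p.1.2), p.2)) hne1 rfl rfl,
      hco (((p.1.1, (stepF δ)^[i+1] p.1.2), p.2)) (((p.1.1, (stepF δ)^[i] p.1.2), p.2)) hne2 rfl rfl]
    simp only []
    rw [hit i (by omega), hit (i+1) (by omega), hstep.1, hstep.2]

/-- color of the i-th edge of a z-run -/
lemma color_z_edge (h3 : 3 ≤ n₃) (τ : Bool) (p : VV n₁ n₂ n₃) {i : ℕ} (hi : i + 2 ≤ n₃) :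
    cN a b c n₁ n₂ n₃ s((mvZ τ)^[i] p, mvZ τ ((mvZ τ)^[i] p))
      = gz a b c (eix n₃ τ p.2.val i) := by
  have hit : ∀ j, j ≤ n₃ → ((stepF τ)^[j] p.2).val = pos n₃ τ p.2.val j :=
    stepF_iterate (by omega) τ p.2
  have hstep := ei_step (n := n₃) h3 τ p.2.isLt hi
  have hne : stepF τ ((stepF τ)^[i] p.2) ≠ (stepF τ)^[i] p.2 :=
    stepF_val_ne h3 τ _
  have hne1 : (stepF τ)^[i] p.2 ≠ (stepF τ)^[i+1] p.2 := by
    rw [Function.iterate_succ_apply']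
    exact Ne.symm hne
  have hne2 : (stepF τ)^[i+1] p.2 ≠ (stepF τ)^[i] p.2 := hne1.symm
  have hco : ∀ q r : VV n₁ n₂ n₃, q.2 ≠ r.2 → q.1.1 = r.1.1 → q.1.2 = r.1.2 →
      colOf a b c n₁ n₂ n₃ q r = gz a b c (ei n₃ q.2.val r.2.val) := by
    intro q r hzz hxx hy
    unfold colOf
    rw [if_neg (by intro hh; exact hzz hh.2), if_neg (by intro hh; exact hzz hh.2),
      if_pos ⟨hxx, hy⟩]
  rw [mvZ_iterate]
  have hmv : mvZ τ (((p.1.1, p.1.2), (stepF τ)^[i] p.2) : VV n₁ n₂ n₃)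
      = ((p.1.1, p.1.2), (stepF τ)^[i+1] p.2) := by
    simp [mvZ, Function.iterate_succ_apply']
  rw [hmv]
  rw [cN_eval]
  · rw [hco (((p.1.1, p.1.2), (stepF τ)^[i] p.2)) (((p.1.1, p.1.2), (stepF τ)^[i+1] p.2)) hne1 rfl rfl]
    simp only []
    rw [hit i (by omega), hit (i+1) (by omega), hstep.1]
  · rw [hco (((p.1.1, p.1.2), (stepF τ)^[i] p.2)) (((p.1.1, p.1.2), (stepF τ)^[i+1] p.2)) hne1 rfl rfl,
      hco (((p.1.1, p.1.2), (stepF τ)^[i+1] p.2)) (((p.1.1, p.1.2), (stepF τ)^[i] p.2)) hne2 rfl rfl]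
    simp only []
    rw [hit i (by omega), hit (i+1) (by omega), hstep.1, hstep.2]

end Graph2

section Main
variable {a b c : ℕ} {n₁ n₂ n₃ : ℕ} [NeZero n₁] [NeZero n₂] [NeZero n₃]

lemma ei_lt {n X X' : ℕ} (hX : X < n) (hX' : X' < n) : ei n X X' < n := by
  unfold ei; split <;> omega

lemma colOf_lt (ha : 1 ≤ a) (hb : 1 ≤ b) (hc : 1 ≤ c)
    (h1 : n₁ = 2*a+1) (h2 : n₂ = 2*b+1) (h3 : n₃ = 2*c+1) (p q : VV n₁ n₂ n₃) :
    colOf a b c n₁ n₂ n₃ p q < a+b+c+2 := by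
  unfold colOf
  split_ifs with t1 t2 t3
  · have hE : ei n₁ p.1.1.val q.1.1.val < n₁ := ei_lt p.1.1.isLt q.1.1.isLt
    by_cases h0 : ei n₁ p.1.1.val q.1.1.val = 0
    · rw [h0]
      show hx a b 0 _ < _
      rw [hx, if_pos rfl]
      rcases gam_range (a := a) h2 p.1.2.isLt with h | h <;> omega
    · have := hx_range (b := b) (Y := p.1.2.val) h1 hE h0
      omega
  · rcases gy_range (a := a) h2 (ei_lt p.1.2.isLt q.1.2.isLt) with h | h <;> omega
  · have := gz_range (a := a) (b := b) h3 (ei_lt p.2.isLt q.2.isLt)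
    omega
  · omega

lemma cN_lt (ha : 1 ≤ a) (hb : 1 ≤ b) (hc : 1 ≤ c)
    (h1 : n₁ = 2*a+1) (h2 : n₂ = 2*b+1) (h3 : n₃ = 2*c+1) (e : Sym2 (VV n₁ n₂ n₃)) :
    cN a b c n₁ n₂ n₃ e < a+b+c+2 := by
  induction e with
  | _ p q =>
    unfold cN
    rw [Sym2.lift_mk]
    show (if enc n₁ n₂ n₃ p ≤ enc n₁ n₂ n₃ q then colOf a b c n₁ n₂ n₃ p q
      else colOf a b c n₁ n₂ n₃ q p) < _
    split_ifs <;> exact colOf_lt ha hb hc h1 h2 h3 _ _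

lemma cd_self (n X : ℕ) : cd n X X = 0 := by unfold cd dN; simp

lemma gam_b1 (b a : ℕ) : gam b a (b+1) = 0 := by simp [gam]

lemma eix_comp {n : ℕ} (d : Bool) {Y s i : ℕ} (hY : Y < n) (hb : s + i + 1 ≤ n) :
    eix n d (pos n d Y s) i = eix n d Y (s + i) := by
  cases d <;> simp only [eix, pos] <;> split_ifs <;> omega

lemma pos_comp {n : ℕ} (d : Bool) {Y s i : ℕ} (hY : Y < n) (hb : s + i ≤ n) :
    pos n d (pos n d Y s) i = pos n d Y (s + i) := by
  cases d <;> simp only [pos] <;> split_ifs <;> omega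

/-- lower bound on walk lengths in the triple torus -/
lemma walk_lb {m₁ m₂ m₃ : ℕ} (h1 : n₁ = 2*m₁+1) (h2 : n₂ = 2*m₂+1) (h3 : n₃ = 2*m₃+1)
    (hm1 : 1 ≤ m₁) (hm2 : 1 ≤ m₂) (hm3 : 1 ≤ m₃) {u v : VV n₁ n₂ n₃}
    (w : (GT n₁ n₂ n₃).Walk u v) :
    cd n₁ u.1.1.val v.1.1.val + cd n₂ u.1.2.val v.1.2.val + cd n₃ u.2.val v.2.val
      ≤ w.length := by
  induction w with
  | nil => simp [cd_self]
  | @cons p q r h w ih =>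
    rw [Walk.length_cons]
    rcases h with (⟨hh, hz⟩ | ⟨hh, hxy⟩)
    · rcases hh with (⟨hadj, hy⟩ | ⟨hadj, hxx⟩)
      · have := cd_step h1 hm1 (t := p.1.1) (t' := q.1.1) r.1.1.val r.1.1.isLt hadj
        rw [hz, hy] at *
        omega
      · have := cd_step h2 hm2 (t := p.1.2) (t' := q.1.2) r.1.2.val r.1.2.isLt hadj
        rw [hz, hxx] at *
        omega
    · have := cd_step h3 hm3 (t := p.2) (t' := q.2) r.2.val r.2.isLt hh
      rw [hxy] at *
      omega

/-- choice of the split point `s` -/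
lemma choose_s (ha : 1 ≤ a) (hb : 1 ≤ b) (h2 : n₂ = 2*b+1)
    (σ δ : Bool) {X Y : ℕ} (hX : X < n₁) (hY : Y < n₂) {d₁ d₂ : ℕ}
    (hd₁ : d₁ ≤ a) (hd₂ : d₂ ≤ b) :
    ∃ s ≤ d₂, ∀ j < d₁, eix n₁ σ X j = 0 →
      ∀ i < d₂, gy b a (eix n₂ δ Y i) ≠ gam b a (pos n₂ δ Y s) := by
  by_cases hcase : (∃ j, j < d₁ ∧ eix n₁ σ X j = 0) ∧ d₂ = b ∧
      (∀ i, i < d₂ → eix n₂ δ Y i ≠ 0)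
  · obtain ⟨hex, hdb, hnz⟩ := hcase
    obtain ⟨s, hsle, hspos⟩ := caseB hb h2 δ hY (by rw [← hdb]; exact hnz)
    refine ⟨s, by omega, ?_⟩
    intro j hj hj0 i hi hgy
    rw [hspos, gam_b1] at hgy
    rw [gy_eq_zero h2 (eix_lt δ hY (by omega))] at hgy
    exact hnz i hi hgy
  · refine ⟨cond δ d₂ 0, by cases δ <;> simp [cond] <;> omega, ?_⟩
    intro j hj hj0 i hi
    refine caseA hb h2 δ hY hd₂ ?_ i hi
    by_cases hdb : d₂ = b
    · right
      by_contra hno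
      push_neg at hno
      exact hcase ⟨⟨j, hj, hj0⟩, hdb, fun i' hi' => hno i' hi'⟩
    · left; omega

/-- the main per-pair construction -/
lemma good_pair (ha : 1 ≤ a) (hb : 1 ≤ b) (hc : 1 ≤ c)
    (h1 : n₁ = 2*a+1) (h2 : n₂ = 2*b+1) (h3 : n₃ = 2*c+1) (u v : VV n₁ n₂ n₃) :
    ∃ p : (GT n₁ n₂ n₃).Walk u v, p.IsPath ∧ p.length = (GT n₁ n₂ n₃).dist u v ∧
      ((p.edges.map (cN a b c n₁ n₂ n₃)).Nodup) := by
  have hn1 : 3 ≤ n₁ := by omega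
  have hn2 : 3 ≤ n₂ := by omega
  have hn3 : 3 ≤ n₃ := by omega
  obtain ⟨hd₁, hre1⟩ := reach h1 ha u.1.1 v.1.1
  obtain ⟨hd₂, hre2⟩ := reach h2 hb u.1.2 v.1.2
  obtain ⟨hd₃, hre3⟩ := reach h3 hc u.2 v.2
  obtain ⟨s, hsle, HY⟩ := choose_s (n₁ := n₁) ha hb h2
    (dirOf n₁ u.1.1.val v.1.1.val) (dirOf n₂ u.1.2.val v.1.2.val)
    u.1.1.isLt u.1.2.isLt hd₁ hd₂
  -- abbreviations
  set σ := dirOf n₁ u.1.1.val v.1.1.val with hσ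
  set δ := dirOf n₂ u.1.2.val v.1.2.val with hδ
  set τ := dirOf n₃ u.2.val v.2.val with hτ
  set d₁ := cd n₁ u.1.1.val v.1.1.val with hd1e
  set d₂ := cd n₂ u.1.2.val v.1.2.val with hd2e
  set d₃ := cd n₃ u.2.val v.2.val with hd3e
  have hy2 : (stepF δ)^[d₂ - s] ((stepF δ)^[s] u.1.2) = v.1.2 := by
    rw [← Function.iterate_add_apply]
    have hh : d₂ - s + s = d₂ := by omega
    rw [hh]; exact hre2
  have hend : (mvZ τ)^[d₃] ((mvY δ)^[d₂ - s] ((mvX σ)^[d₁] ((mvY δ)^[s] u)))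
      = v := by
    simp only [mvY_iterate, mvX_iterate, mvZ_iterate]
    rw [hre1, hy2, hre3]
  have hYval : ∀ k, k ≤ n₂ → ((stepF δ)^[k] u.1.2).val = pos n₂ δ u.1.2.val k :=
    stepF_iterate (by omega) δ u.1.2
  -- the walk
  set W : (GT n₁ n₂ n₃).Walk u v := ((straight (mvY δ) (mvY_adj hn2 δ) s u).append
      ((straight (mvX σ) (mvX_adj hn1 σ) d₁ _).append
      ((straight (mvY δ) (mvY_adj hn2 δ) (d₂ - s) _).append
      (straight (mvZ τ) (mvZ_adj hn3 τ) d₃ _)))).copy rfl hend with hWdef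
  have hlen : W.length = d₁ + d₂ + d₃ := by
    rw [hWdef, Walk.length_copy, Walk.length_append, Walk.length_append, Walk.length_append,
      straight_length, straight_length, straight_length, straight_length]
    omega
  have hreach : (GT n₁ n₂ n₃).Reachable u v := ⟨W⟩
  have hdlb : d₁ + d₂ + d₃ ≤ (GT n₁ n₂ n₃).dist u v := by
    obtain ⟨w', hw'⟩ := hreach.exists_walk_length_eq_dist
    rw [← hw']
    exact walk_lb h1 h2 h3 ha hb hc w'
  have hdist : (GT n₁ n₂ n₃).dist u v = d₁ + d₂ + d₃ :=
    le_antisymm (hlen ▸ SimpleGraph.dist_le W) hdlb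
  -- projections of intermediate start vertices
  have e11 : ((mvY δ)^[s] u).1.1 = u.1.1 := by rw [mvY_iterate]
  have e12 : ((mvY δ)^[s] u).1.2.val = pos n₂ δ u.1.2.val s := by
    rw [mvY_iterate]; exact hYval s (by omega)
  have e32 : ((mvX σ)^[d₁] ((mvY δ)^[s] u)).1.2.val = pos n₂ δ u.1.2.val s := by
    rw [mvX_iterate, mvY_iterate]; exact hYval s (by omega)
  have e42 : ((mvY δ)^[d₂ - s] ((mvX σ)^[d₁] ((mvY δ)^[s] u))).2 = u.2 := by
    rw [mvY_iterate, mvX_iterate, mvY_iterate]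
  -- the edge colors
  have hmap : W.edges.map (cN a b c n₁ n₂ n₃) =
      (List.range s).map (fun i => gy b a (eix n₂ δ u.1.2.val i))
      ++ ((List.range d₁).map
          (fun j => hx a b (eix n₁ σ u.1.1.val j) (pos n₂ δ u.1.2.val s))
      ++ ((List.range (d₂ - s)).map (fun i => gy b a (eix n₂ δ u.1.2.val (s + i)))
      ++ (List.range d₃).map (fun k => gz a b c (eix n₃ τ u.2.val k)))) := by
    rw [hWdef, Walk.edges_copy, Walk.edges_append, Walk.edges_append, Walk.edges_append,
      straight_edges, straight_edges, straight_edges, straight_edges,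
      List.map_append, List.map_append, List.map_append,
      List.map_map, List.map_map, List.map_map, List.map_map]
    refine congrArg₂ (· ++ ·) ?_ (congrArg₂ (· ++ ·) ?_ (congrArg₂ (· ++ ·) ?_ ?_))
    · refine List.map_congr_left ?_
      intro i hi
      rw [List.mem_range] at hi
      simp only [Function.comp_apply]
      rw [Function.iterate_succ_apply']
      exact color_y_edge a b c hn2 δ u (by omega)
    · refine List.map_congr_left ?_
      intro j hj
      rw [List.mem_range] at hj
      simp only [Function.comp_apply]
      rw [Function.iterate_succ_apply']
      rw [color_x_edge a b c hn1 σ _ (by omega), e11, e12]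
    · refine List.map_congr_left ?_
      intro i hi
      rw [List.mem_range] at hi
      simp only [Function.comp_apply]
      rw [Function.iterate_succ_apply']
      rw [color_y_edge a b c hn2 δ _ (by omega), e32,
        eix_comp δ u.1.2.isLt (by omega)]
    · refine List.map_congr_left ?_
      intro k hk
      rw [List.mem_range] at hk
      simp only [Function.comp_apply]
      rw [Function.iterate_succ_apply']
      rw [color_z_edge a b c hn3 τ _ (by omega), e42]
  have hnodup : (W.edges.map (cN a b c n₁ n₂ n₃)).Nodup := by
    rw [hmap]
    exact master_nodup ha hb hc h1 h2 h3 σ δ τ u.1.1.isLt u.1.2.isLt u.2.isLt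
      hd₁ hd₂ hd₃ hsle HY
  have hbyLen : W.bypass.length = (GT n₁ n₂ n₃).dist u v := by
    have hub := SimpleGraph.dist_le W.bypass
    have hlb := W.length_bypass_le
    omega
  refine ⟨W.bypass, W.bypass_isPath, hbyLen, ?_⟩
  have hbe : W.bypass.edges.Nodup := W.bypass_isPath.isTrail.edges_nodup
  refine List.Nodup.map_on ?_ hbe
  intro x hx1 y hy1 hxy
  exact List.inj_on_of_nodup_map hnodup (W.edges_bypass_subset hx1)
    (W.edges_bypass_subset hy1) hxy

end Main
end SRCAux

theorem stmt_15 (n₁ n₂ n₃ : ℕ) (h₁ : 3 ≤ n₁) (h₂ : 3 ≤ n₂) (h₃ : 3 ≤ n₃)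
    (o₁ : Odd n₁) (o₂ : Odd n₂) (o₃ : Odd n₃) :
    (SimpleGraph.boxProd (SimpleGraph.boxProd (cycleGraph n₁) (cycleGraph n₂)) (cycleGraph n₃)).src ≤ (n₁ + n₂ + n₃ + 1) / 2 ∧
    (n₁ + n₂ + n₃ + 1) / 2 < (n₁ + 1) / 2 + (n₂ + 1) / 2 + (n₃ + 1) / 2 := by
  obtain ⟨a, hoa⟩ := o₁
  obtain ⟨b, hob⟩ := o₂
  obtain ⟨c, hoc⟩ := o₃
  have h1 : n₁ = 2*a+1 := by omega
  have h2 : n₂ = 2*b+1 := by omega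
  have h3 : n₃ = 2*c+1 := by omega
  have ha : 1 ≤ a := by omega
  have hb : 1 ≤ b := by omega
  have hc : 1 ≤ c := by omega
  constructor
  · have hkey : (n₁ + n₂ + n₃ + 1) / 2 = a + b + c + 2 := by omega
    rw [hkey]
    haveI : NeZero n₁ := ⟨by omega⟩
    haveI : NeZero n₂ := ⟨by omega⟩
    haveI : NeZero n₃ := ⟨by omega⟩
    apply Nat.sInf_le
    refine ⟨fun e => ⟨SRCAux.cN a b c n₁ n₂ n₃ e,
      SRCAux.cN_lt ha hb hc h1 h2 h3 e⟩, ?_⟩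
    intro u v huv
    obtain ⟨p, hpath, hplen, hpnodup⟩ := SRCAux.good_pair ha hb hc h1 h2 h3 u v
    refine ⟨p, hpath, hplen, ?_⟩
    have hcomp : p.edges.map (SRCAux.cN a b c n₁ n₂ n₃) =
        (p.edges.map (fun e => (⟨SRCAux.cN a b c n₁ n₂ n₃ e,
          SRCAux.cN_lt ha hb hc h1 h2 h3 e⟩ : Fin (a+b+c+2)))).map Fin.val := by
      rw [List.map_map]; rfl
    rw [hcomp] at hpnodup
    exact hpnodup.of_map _
  · omega
end

section
/- For any connected graph Γ and any integer n ≥ 3, src(Γ □ C_3) ≤ 1 + src(Γ □ C_2). -/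
open SimpleGraph Finset

namespace StrongRainbowAux

variable {V : Type*} {G : SimpleGraph V}

/-- `ρ : Fin 3 → Fin 2`, sending `0, 1, 2` to `0, 1, 0`. -/
def rho : Fin 3 → Fin 2 := fun t => if t.val = 1 then 1 else 0

/-- `φ₀ : Fin 2 → Fin 3`, sending `0, 1` to `0, 1`. -/
def phi0 : Fin 2 → Fin 3 := Fin.castLE (by omega)

/-- `φ₂ : Fin 2 → Fin 3`, sending `0, 1` to `2, 1`. -/
def phi2 : Fin 2 → Fin 3 := fun t => if t.val = 0 then 2 else 1

lemma rho_phi0 : ∀ t : Fin 2, rho (phi0 t) = t := by decide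
lemma rho_phi2 : ∀ t : Fin 2, rho (phi2 t) = t := by decide
lemma phi0_rho : ∀ t : Fin 3, t ≠ 2 → phi0 (rho t) = t := by decide
lemma rho_inj' : ∀ s t : Fin 3, s ≠ 2 → t ≠ 2 → s ≠ t → rho s ≠ rho t := by decide
lemma phi0_ne_two : ∀ t : Fin 2, phi0 t ≠ 2 := by decide
lemma phi0_inj : Function.Injective phi0 := by decide
lemma phi2_inj : Function.Injective phi2 := by decide

/-- Lower bound for walks in `G □ ⊤`. -/
lemma lower_bound (hG : G.Connected) {β : Type*} [DecidableEq β] :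
    ∀ {x y : V × β} (p : (G □ (⊤ : SimpleGraph β)).Walk x y),
      G.dist x.1 y.1 + (if x.2 = y.2 then 0 else 1) ≤ p.length := by
  intro x y p
  induction p with
  | nil => simp [SimpleGraph.dist_self]
  | @cons a b d h q ih =>
    rw [SimpleGraph.boxProd_adj] at h
    rw [Walk.length_cons]
    rcases h with ⟨ha, h2⟩ | ⟨ha, h1⟩
    · have htri : G.dist a.1 d.1 ≤ 1 + G.dist b.1 d.1 := by
        have := hG.dist_triangle (u := a.1) (v := b.1) (w := d.1)
        rwa [SimpleGraph.dist_eq_one_iff_adj.mpr ha] at this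
      rw [h2]
      split_ifs at ih ⊢ <;> omega
    · rw [h1]
      split_ifs at ih ⊢ <;> omega

lemma dist_box {β : Type*} [DecidableEq β] [Nonempty β] (hG : G.Connected) (u v : V) (i j : β) :
    (G □ (⊤ : SimpleGraph β)).dist (u, i) (v, j) = G.dist u v + (if i = j then 0 else 1) := by
  refine le_antisymm ?_ ?_
  · obtain ⟨p, hp⟩ := hG.exists_walk_length_eq_dist u v
    set hlift : (G □ (⊤ : SimpleGraph β)).Walk (u, i) (v, i) :=
      p.map (SimpleGraph.boxProdLeft G (⊤ : SimpleGraph β) i).toHom with hldef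
    have hliftlen : hlift.length = G.dist u v := by
      rw [hldef]; exact (Walk.length_map _ _).trans hp
    by_cases hij : i = j
    · subst hij
      simpa [hliftlen] using SimpleGraph.dist_le hlift
    · have hadj : (G □ (⊤ : SimpleGraph β)).Adj (v, i) (v, j) :=
        SimpleGraph.boxProd_adj.mpr (Or.inr ⟨(SimpleGraph.top_adj _ _).mpr hij, rfl⟩)
      have := SimpleGraph.dist_le (hlift.concat hadj)
      rw [Walk.length_concat, hliftlen] at this
      rw [if_neg hij]
      omega
  · obtain ⟨p, hp⟩ :=
      (hG.boxProd SimpleGraph.connected_top).exists_walk_length_eq_dist (u, i) (v, j)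
    rw [← hp]
    exact lower_bound hG p


/-- The map `V × Fin 2 → V × Fin 3` induced by `φ`. -/
def fmOf (φ : Fin 2 → Fin 3) : V × Fin 2 → V × Fin 3 := fun w => (w.1, φ w.2)

lemma fmOf_inj {φ : Fin 2 → Fin 3} (hinj : Function.Injective φ) :
    Function.Injective (fmOf (V := V) φ) := by
  rintro ⟨a1, a2⟩ ⟨b1, b2⟩ h
  rw [fmOf, Prod.mk.injEq] at h
  exact Prod.ext h.1 (hinj h.2)

lemma fmOf_phi0_eq {t : V × Fin 3} (ht : t.2 ≠ 2) : fmOf phi0 (t.1, rho t.2) = t :=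
  Prod.ext rfl (phi0_rho _ ht)

/-- Any short enough walk in `G □ K₃` between vertices in layers `{0,1}` pulls back to
`G □ K₂`. -/
lemma pullback (hG : G.Connected) :
    ∀ {x y : V × Fin 3} (p : (G □ (⊤ : SimpleGraph (Fin 3))).Walk x y),
      x.2 ≠ 2 → y.2 ≠ 2 → p.length ≤ G.dist x.1 y.1 + (if x.2 = y.2 then 0 else 1) →
      ∃ q : (G □ (⊤ : SimpleGraph (Fin 2))).Walk (x.1, rho x.2) (y.1, rho y.2),
        q.length = p.length ∧ q.edges.map (Sym2.map (fmOf phi0)) = p.edges ∧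
          q.support.map (fmOf phi0) = p.support := by
  intro x y p
  induction p with
  | @nil a =>
    intro hx _ _
    refine ⟨Walk.nil, by simp, by simp, ?_⟩
    simp [fmOf_phi0_eq hx]
  | @cons a b d h q ih =>
    intro hx hy hlen
    rcases SimpleGraph.boxProd_adj.mp h with ⟨ha, h2⟩ | ⟨ha, h1⟩
    · -- horizontal step
      have hb2 : b.2 ≠ 2 := h2 ▸ hx
      have htri : G.dist a.1 d.1 ≤ 1 + G.dist b.1 d.1 := by
        have := hG.dist_triangle (u := a.1) (v := b.1) (w := d.1)
        rwa [SimpleGraph.dist_eq_one_iff_adj.mpr ha] at this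
      have hq : q.length ≤ G.dist b.1 d.1 + (if b.2 = d.2 then 0 else 1) := by
        rw [Walk.length_cons, h2] at hlen
        split_ifs at hlen ⊢ <;> omega
      obtain ⟨q', hl, he, hs⟩ := ih hb2 hy hq
      have hadj : (G □ (⊤ : SimpleGraph (Fin 2))).Adj (a.1, rho a.2) (b.1, rho b.2) :=
        SimpleGraph.boxProd_adj.mpr (Or.inl ⟨ha, by rw [h2]⟩)
      refine ⟨Walk.cons hadj q', by simp [hl], ?_, ?_⟩
      · rw [Walk.edges_cons, Walk.edges_cons, List.map_cons, he, Sym2.map_pair_eq,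
          fmOf_phi0_eq hx, fmOf_phi0_eq hb2]
      · rw [Walk.support_cons, Walk.support_cons, List.map_cons, hs, fmOf_phi0_eq hx]
    · -- vertical step
      have ha' : a.2 ≠ b.2 := (SimpleGraph.top_adj _ _).mp ha
      have hb2 : b.2 ≠ 2 := by
        intro h22
        have hlow := lower_bound hG q
        have hbd : b.2 ≠ d.2 := by rw [h22]; exact fun hh => hy hh.symm
        rw [if_neg hbd] at hlow
        rw [Walk.length_cons, h1] at hlen
        split_ifs at hlen <;> omega
      have hq : q.length ≤ G.dist b.1 d.1 + (if b.2 = d.2 then 0 else 1) := by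
        rw [Walk.length_cons, h1] at hlen
        split_ifs at hlen ⊢ <;> omega
      obtain ⟨q', hl, he, hs⟩ := ih hb2 hy hq
      have hadj : (G □ (⊤ : SimpleGraph (Fin 2))).Adj (a.1, rho a.2) (b.1, rho b.2) :=
        SimpleGraph.boxProd_adj.mpr
          (Or.inr ⟨(SimpleGraph.top_adj _ _).mpr (rho_inj' _ _ hx hb2 ha'), h1⟩)
      refine ⟨Walk.cons hadj q', by simp [hl], ?_, ?_⟩
      · rw [Walk.edges_cons, Walk.edges_cons, List.map_cons, he, Sym2.map_pair_eq,
          fmOf_phi0_eq hx, fmOf_phi0_eq hb2]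
      · rw [Walk.support_cons, Walk.support_cons, List.map_cons, hs, fmOf_phi0_eq hx]


/-- The extension of a coloring of `G □ K₂` to `G □ K₃`, using one extra color. -/
def extColor {k : ℕ} (c : Sym2 (V × Fin 2) → Fin k) : Sym2 (V × Fin 3) → Fin (k + 1) :=
  fun s =>
    if (s.map fun w => rho w.2).IsDiag ∧ ¬(s.map Prod.snd).IsDiag then Fin.last k
    else (c (s.map fun w => (w.1, rho w.2))).castSucc

lemma extColor_map {k : ℕ} (c : Sym2 (V × Fin 2) → Fin k) (φ : Fin 2 → Fin 3)
    (hρφ : ∀ t, rho (φ t) = t) :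
    ∀ s : Sym2 (V × Fin 2), extColor c (s.map (fmOf φ)) = (c s).castSucc := by
  intro s
  induction s with
  | _ a b =>
    rw [Sym2.map_pair_eq, extColor, if_neg]
    · have h1 : Sym2.map (fun w => (w.1, rho w.2)) s(fmOf φ a, fmOf φ b) = s(a, b) := by
        rw [Sym2.map_pair_eq]
        simp only [fmOf]
        rw [hρφ, hρφ, Prod.mk.eta, Prod.mk.eta]
      rw [h1]
    · rintro ⟨hA, hB⟩
      apply hB
      rw [Sym2.map_pair_eq, Sym2.mk_isDiag_iff] at hA ⊢
      simp only [fmOf] at hA ⊢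
      rw [hρφ, hρφ] at hA
      rw [hA]

lemma extColor_vert {k : ℕ} (c : Sym2 (V × Fin 2) → Fin k) {i j : Fin 3}
    (hρ : rho i = rho j) (hij : i ≠ j) (v w : V) (hvw : v = w) :
    extColor c s((v, i), (w, j)) = Fin.last k := by
  subst hvw
  rw [extColor, if_pos]
  constructor
  · rw [Sym2.map_pair_eq, Sym2.mk_isDiag_iff]
    exact hρ
  · rw [Sym2.map_pair_eq, Sym2.mk_isDiag_iff]
    exact hij

/-- Lifting an injective `φ : Fin 2 → Fin 3` to a graph homomorphism
`G □ K₂ →g G □ K₃`. -/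
def liftHom (G : SimpleGraph V) (φ : Fin 2 → Fin 3) (hinj : Function.Injective φ) :
    (G □ (⊤ : SimpleGraph (Fin 2))) →g (G □ (⊤ : SimpleGraph (Fin 3))) where
  toFun := fmOf φ
  map_rel' := by
    intro a b hab
    rcases SimpleGraph.boxProd_adj.mp hab with ⟨ha, h2⟩ | ⟨ha, h1⟩
    · exact SimpleGraph.boxProd_adj.mpr (Or.inl ⟨ha, by simp only [fmOf]; rw [h2]⟩)
    · refine SimpleGraph.boxProd_adj.mpr (Or.inr ⟨?_, by simp only [fmOf]; rw [h1]⟩)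
      simp only [fmOf]
      exact (SimpleGraph.top_adj _ _).mpr
        (fun hh => ((SimpleGraph.top_adj _ _).mp ha) (hinj hh))

@[simp] lemma liftHom_apply (G : SimpleGraph V) (φ : Fin 2 → Fin 3)
    (hinj : Function.Injective φ) : ⇑(liftHom G φ hinj) = fmOf φ := rfl

lemma mapped_edges {k : ℕ} (c : Sym2 (V × Fin 2) → Fin k) (φ : Fin 2 → Fin 3)
    (hinj : Function.Injective φ) (hρφ : ∀ t, rho (φ t) = t)
    {a b : V × Fin 2} (q : (G □ (⊤ : SimpleGraph (Fin 2))).Walk a b) :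
    (q.map (liftHom G φ hinj)).edges.map (extColor c) = (q.edges.map c).map Fin.castSucc := by
  rw [Walk.edges_map, List.map_map, List.map_map, liftHom_apply]
  congr 1
  funext s
  exact extColor_map c φ hρφ s

/-- The case of two layers both in the range of an appropriate `φ`. -/
lemma covered {k : ℕ} (hG : G.Connected) {c : Sym2 (V × Fin 2) → Fin k}
    (hc : (G □ (⊤ : SimpleGraph (Fin 2))).IsStrongRainbowColoring c)
    (φ : Fin 2 → Fin 3) (hinj : Function.Injective φ) (hρφ : ∀ t, rho (φ t) = t)
    {u v : V} (i j : Fin 3) (a b : Fin 2) (ha : φ a = i) (hb : φ b = j)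
    (hne : (u, i) ≠ (v, j)) :
    ∃ p : (G □ (⊤ : SimpleGraph (Fin 3))).Walk (u, i) (v, j),
      p.IsPath ∧ p.length = (G □ (⊤ : SimpleGraph (Fin 3))).dist (u, i) (v, j) ∧
        (p.edges.map (extColor c)).Nodup := by
  subst ha hb
  have hne2 : (u, a) ≠ (v, b) := by
    intro h
    apply hne
    rw [Prod.mk.injEq] at h ⊢
    exact ⟨h.1, by rw [h.2]⟩
  obtain ⟨q, hqp, hql, hqc⟩ := hc _ _ hne2
  refine ⟨q.map (liftHom G φ hinj),
    Walk.map_isPath_of_injective (by rw [liftHom_apply]; exact fmOf_inj hinj) hqp, ?_, ?_⟩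
  · refine (Walk.length_map _ _).trans ?_
    rw [hql, dist_box hG, dist_box hG]
    by_cases hab : a = b
    · rw [if_pos hab, if_pos (by rw [hab])]
    · rw [if_neg hab, if_neg (fun hh => hab (hinj hh))]
  · refine (congrArg List.Nodup (mapped_edges c φ hinj hρφ q)).mpr ?_
    exact hqc.map (Fin.castSucc_injective k)

/-- The case of layers `(0,2)` resp. `(2,0)`, using the extra color. -/
lemma special {k : ℕ} (hG : G.Connected) {c : Sym2 (V × Fin 2) → Fin k}
    (hc : (G □ (⊤ : SimpleGraph (Fin 2))).IsStrongRainbowColoring c)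
    (φ : Fin 2 → Fin 3) (hinj : Function.Injective φ) (hρφ : ∀ t, rho (φ t) = t)
    (j : Fin 3) (hij : φ 0 ≠ j) (hjr : ∀ t, φ t ≠ j) (hρij : rho (φ 0) = rho j)
    (u v : V) :
    ∃ p : (G □ (⊤ : SimpleGraph (Fin 3))).Walk (u, φ 0) (v, j),
      p.IsPath ∧ p.length = (G □ (⊤ : SimpleGraph (Fin 3))).dist (u, φ 0) (v, j) ∧
        (p.edges.map (extColor c)).Nodup := by
  by_cases huv : u = v
  · subst huv
    have hadj : (G □ (⊤ : SimpleGraph (Fin 3))).Adj (u, φ 0) (u, j) :=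
      SimpleGraph.boxProd_adj.mpr (Or.inr ⟨(SimpleGraph.top_adj _ _).mpr hij, rfl⟩)
    refine ⟨Walk.cons hadj Walk.nil, ?_, ?_, by simp⟩
    · rw [Walk.isPath_def, Walk.support_cons, Walk.support_nil]
      simp [Prod.ext_iff, hij]
    · rw [dist_box hG, SimpleGraph.dist_self, if_neg hij]
      simp
  · obtain ⟨q, hqp, hql, hqc⟩ := hc (u, 0) (v, 0) (by simp [Prod.ext_iff, huv])
    have hmp : (q.map (liftHom G φ hinj)).IsPath :=
      Walk.map_isPath_of_injective (by rw [liftHom_apply]; exact fmOf_inj hinj) hqp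
    have hvj : (v, j) ∉ (q.map (liftHom G φ hinj)).support := by
      rw [Walk.support_map]
      intro hmem
      obtain ⟨x, _, hfx⟩ := List.mem_map.mp hmem
      exact hjr x.2 (congrArg Prod.snd hfx)
    have hadj : (G □ (⊤ : SimpleGraph (Fin 3))).Adj (v, φ 0) (v, j) :=
      SimpleGraph.boxProd_adj.mpr (Or.inr ⟨(SimpleGraph.top_adj _ _).mpr hij, rfl⟩)
    have hu0 : (liftHom G φ hinj) (u, 0) = (u, φ 0) := rfl
    have hv0 : (liftHom G φ hinj) (v, 0) = (v, φ 0) := rfl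
    refine ⟨((q.map (liftHom G φ hinj)).copy hu0 hv0).concat hadj, ?_, ?_, ?_⟩
    · rw [Walk.isPath_def, Walk.support_concat, Walk.support_copy, List.nodup_append]
      refine ⟨(Walk.isPath_def _).mp hmp, List.nodup_singleton _, ?_⟩
      intro x hx y hx' hxy
      subst hxy
      rw [List.mem_singleton] at hx'
      subst hx'
      exact hvj hx
    · rw [Walk.length_concat, Walk.length_copy, Walk.length_map, hql, dist_box hG, dist_box hG,
        if_pos rfl, if_neg hij]
    · rw [Walk.edges_concat, Walk.edges_copy, List.concat_eq_append, List.map_append,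
        mapped_edges c φ hinj hρφ q, List.nodup_append]
      refine ⟨hqc.map (Fin.castSucc_injective k), by simp, ?_⟩
      intro x hx z hx' hxz
      subst hxz
      rw [List.map_cons, List.map_nil, List.mem_singleton] at hx'
      rw [extColor_vert c hρij hij v v rfl] at hx'
      obtain ⟨y, _, hy⟩ := List.mem_map.mp hx
      rw [← hy] at hx'
      exact absurd hx' (Fin.ne_of_lt (Fin.castSucc_lt_last y))


lemma phi2_zero : phi2 0 = 2 := by decide
lemma phi2_ne : ∀ t : Fin 2, phi2 t ≠ (0 : Fin 3) := by decide

/-- The extended coloring is a strong rainbow coloring of `G □ K₃`. -/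
lemma main_ext {k : ℕ} (hG : G.Connected) {c : Sym2 (V × Fin 2) → Fin k}
    (hc : (G □ (⊤ : SimpleGraph (Fin 2))).IsStrongRainbowColoring c) :
    (G □ (⊤ : SimpleGraph (Fin 3))).IsStrongRainbowColoring (extColor c) := by
  rintro ⟨u, i⟩ ⟨v, j⟩ hne
  fin_cases i <;> fin_cases j
  · exact covered hG hc phi0 phi0_inj rho_phi0 _ _ 0 0 (by decide) (by decide) hne
  · exact covered hG hc phi0 phi0_inj rho_phi0 _ _ 0 1 (by decide) (by decide) hne
  · exact special hG hc phi0 phi0_inj rho_phi0 2 (by decide) phi0_ne_two (by decide) u v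
  · exact covered hG hc phi0 phi0_inj rho_phi0 _ _ 1 0 (by decide) (by decide) hne
  · exact covered hG hc phi0 phi0_inj rho_phi0 _ _ 1 1 (by decide) (by decide) hne
  · exact covered hG hc phi2 phi2_inj rho_phi2 _ _ 1 0 (by decide) (by decide) hne
  · exact special hG hc phi2 phi2_inj rho_phi2 0 (by decide) phi2_ne (by decide) u v
  · exact covered hG hc phi2 phi2_inj rho_phi2 _ _ 0 1 (by decide) (by decide) hne
  · exact covered hG hc phi2 phi2_inj rho_phi2 _ _ 0 0 (by decide) (by decide) hne

/-- Restriction: a strong rainbow coloring of `G □ K₃` yields one of `G □ K₂`. -/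
lemma restrict {k : ℕ} (hG : G.Connected) (c' : Sym2 (V × Fin 3) → Fin k)
    (hc' : (G □ (⊤ : SimpleGraph (Fin 3))).IsStrongRainbowColoring c') :
    (G □ (⊤ : SimpleGraph (Fin 2))).IsStrongRainbowColoring
      (fun s => c' (s.map (fmOf phi0))) := by
  rintro ⟨u, a⟩ ⟨v, b⟩ hne
  have hne3 : ((u, phi0 a) : V × Fin 3) ≠ (v, phi0 b) := by
    intro h
    apply hne
    rw [Prod.mk.injEq] at h ⊢
    exact ⟨h.1, phi0_inj h.2⟩
  obtain ⟨p, hp, hl, hcnd⟩ := hc' _ _ hne3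
  have hlen : p.length ≤ G.dist u v + (if phi0 a = phi0 b then 0 else 1) := by
    rw [hl, dist_box hG]
  obtain ⟨q, hql, hqe, hqs⟩ :=
    pullback hG p (phi0_ne_two a) (phi0_ne_two b) hlen
  refine ⟨(q.copy (by rw [rho_phi0]) (by rw [rho_phi0])), ?_, ?_, ?_⟩
  · rw [Walk.isPath_def, Walk.support_copy]
    have := (Walk.isPath_def p).mp hp
    rw [← hqs] at this
    exact this.of_map _
  · rw [Walk.length_copy, hql, hl, dist_box hG, dist_box hG]
    by_cases hab : a = b
    · rw [if_pos hab, if_pos (by rw [hab])]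
    · rw [if_neg hab, if_neg (fun hh => hab (phi0_inj hh))]
  · rw [Walk.edges_copy]
    have : q.edges.map (fun s => c' (s.map (fmOf phi0)))
        = (q.edges.map (Sym2.map (fmOf phi0))).map c' := by
      rw [List.map_map]
      rfl
    rw [this, hqe]
    exact hcnd

end StrongRainbowAux


theorem stmt_16 {V : Type*} (G : SimpleGraph V) (hG : G.Connected) (n : ℕ) (hn : 3 ≤ n) :
    (G □ cycleGraph 3).src ≤ 1 + (G □ cycleGraph 2).src := by
  rw [cycleGraph_three_eq_top, cycleGraph_two_eq_top]
  unfold SimpleGraph.src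
  set S2 := {k : ℕ | ∃ c : Sym2 (V × Fin 2) → Fin k,
    (G □ (⊤ : SimpleGraph (Fin 2))).IsStrongRainbowColoring c} with hS2
  by_cases hne : S2.Nonempty
  · obtain ⟨c, hc⟩ := Nat.sInf_mem hne
    have hmem : (sInf S2 + 1) ∈ {k : ℕ | ∃ c' : Sym2 (V × Fin 3) → Fin k,
        (G □ (⊤ : SimpleGraph (Fin 3))).IsStrongRainbowColoring c'} :=
      ⟨StrongRainbowAux.extColor c, StrongRainbowAux.main_ext hG hc⟩
    calc sInf {k : ℕ | ∃ c' : Sym2 (V × Fin 3) → Fin k,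
        (G □ (⊤ : SimpleGraph (Fin 3))).IsStrongRainbowColoring c'} ≤ sInf S2 + 1 :=
          Nat.sInf_le hmem
      _ = 1 + sInf S2 := by omega
  · have hempty : {k : ℕ | ∃ c' : Sym2 (V × Fin 3) → Fin k,
        (G □ (⊤ : SimpleGraph (Fin 3))).IsStrongRainbowColoring c'} = ∅ := by
      ext k
      simp only [Set.mem_setOf_eq, Set.mem_empty_iff_false, iff_false, not_exists]
      intro c' hc'
      exact hne ⟨k, fun s => c' (s.map (StrongRainbowAux.fmOf StrongRainbowAux.phi0)),
        StrongRainbowAux.restrict hG c' hc'⟩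
    rw [hempty, Nat.sInf_empty]
    exact Nat.zero_le _
end
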